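/- arXiv:1405.2946 — 5 statements merged into one kernel-verified Lean document; each statement's English description precedes it below -/
import Mathlib

section
/- Let μ : [0,∞) → [1,∞) be a continuous growth rate, ε ≥ 0 and a,b > 0. On X = ℝ² with the norm ‖(x₁,x₂)‖ = max{|x₁|,|x₂|}, define P(t)(x₁,x₂) = (x₁ + (μ(t)^ε − 1)x₂, 0), Q(t) = Id − P(t), and U(t,s) = (μ(t)/μ(s))^{−a} P(s) + (μ(t)/μ(s))^{b} Q(t) for t ≥ s ≥ 0. Then U is an evolution operator, P is a projection valued function compatible with U, and for all t ≥ s ≥ 0: ‖U(t,s)P(s)‖ = (μ(t)/μ(s))^{−a} μ(s)^ε and ‖U_Q(s,t)Q(t)‖ ≤ (μ(t)/μ(s))^{−b} μ(t)^ε; in particular U has a nonuniform μ-dichotomy with projection valued function P (with constants a, b, ε, N₁ = N₂ = 1). -/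
/-!
All the projections `P(t)` have the same range `ℝ × {0}`, i.e. `P(t)P(s) = P(s)`, and hence
`Q(t)Q(s) = Q(t)`. Therefore `U(t,s)` acts on the range of `P(s)` as the scalar
`(μ(t)/μ(s))^{-a}` and sends `Q(s)x` to `(μ(t)/μ(s))^b Q(t)x`; the cocycle property and the
compatibility follow, with `U_Q(s,t) = (μ(t)/μ(s))^{-b} Q(s)`. In the sup norm
`‖P(s)‖ = μ(s)^ε` and `‖Q(s)‖ = max(μ(s)^ε - 1, 1) ≤ μ(t)^ε`, which gives the estimates.
-/

open Real MeasureTheory Filter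

noncomputable section

/-- A growth rate: an increasing function `μ : [0,∞) → [1,∞)` with `μ 0 = 1` and
`μ t → ∞` as `t → ∞`. -/
def IsGrowthRate (μ : ℝ → ℝ) : Prop :=
  (∀ t, 0 ≤ t → 1 ≤ μ t) ∧ MonotoneOn μ (Set.Ici 0) ∧ μ 0 = 1 ∧
    Filter.Tendsto μ Filter.atTop Filter.atTop

variable {X : Type*} [NormedAddCommGroup X] [NormedSpace ℝ X]

/-- An evolution operator on `X`. -/
def IsEvolutionOperator (U : ℝ → ℝ → X →L[ℝ] X) : Prop :=
  (∀ t, 0 ≤ t → U t t = 1) ∧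
  (∀ s τ t, 0 ≤ s → s ≤ τ → τ ≤ t → (U t τ).comp (U τ s) = U t s) ∧
  (∀ x : X, ContinuousOn (fun q : ℝ × ℝ => U q.1 q.2 x) {q : ℝ × ℝ | 0 ≤ q.2 ∧ q.2 ≤ q.1})

/-- A (strongly continuous) projection valued function. -/
def IsProjectionValued (P : ℝ → X →L[ℝ] X) : Prop :=
  (∀ t, 0 ≤ t → (P t).comp (P t) = P t) ∧
  (∀ x : X, ContinuousOn (fun t => P t x) (Set.Ici 0))

/-- `P` is compatible with the evolution operator `U`; `V s t` plays the role of
`U_Q(s,t)`, the inverse of the restriction `U(t,s)|_{Q(s)X} : Q(s)X → Q(t)X`,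
where `Q t = 1 - P t`. -/
def CompatibleProjection (U V : ℝ → ℝ → X →L[ℝ] X) (P : ℝ → X →L[ℝ] X) : Prop :=
  (∀ s t, 0 ≤ s → s ≤ t → (P t).comp (U t s) = (U t s).comp (P s)) ∧
  (∀ s t, 0 ≤ s → s ≤ t → ∀ x : X,
    (1 - P s) (V s t ((1 - P t) x)) = V s t ((1 - P t) x)) ∧
  (∀ s t, 0 ≤ s → s ≤ t → ∀ x : X, U t s (V s t ((1 - P t) x)) = (1 - P t) x) ∧
  (∀ s t, 0 ≤ s → s ≤ t → ∀ x : X, V s t (U t s ((1 - P s) x)) = (1 - P s) x)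

/-- Nonuniform μ-dichotomy. -/
def NonuniformMuDichotomy (μ : ℝ → ℝ) (U V : ℝ → ℝ → X →L[ℝ] X)
    (P : ℝ → X →L[ℝ] X) : Prop :=
  ∃ a b ε N₁ N₂ : ℝ, 0 < a ∧ 0 < b ∧ 0 ≤ ε ∧ 1 ≤ N₁ ∧ 1 ≤ N₂ ∧
    ∀ s t, 0 ≤ s → s ≤ t →
      ‖(U t s).comp (P s)‖ ≤ N₁ * (μ t / μ s) ^ (-a) * μ s ^ ε ∧
      ‖(V s t).comp (1 - P t)‖ ≤ N₂ * (μ t / μ s) ^ (-b) * μ t ^ ε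

/-- Uniform μ-dichotomy (the case ε = 0). -/
def UniformMuDichotomy (μ : ℝ → ℝ) (U V : ℝ → ℝ → X →L[ℝ] X)
    (P : ℝ → X →L[ℝ] X) : Prop :=
  ∃ a b N₁ N₂ : ℝ, 0 < a ∧ 0 < b ∧ 1 ≤ N₁ ∧ 1 ≤ N₂ ∧
    ∀ s t, 0 ≤ s → s ≤ t →
      ‖(U t s).comp (P s)‖ ≤ N₁ * (μ t / μ s) ^ (-a) ∧
      ‖(V s t).comp (1 - P t)‖ ≤ N₂ * (μ t / μ s) ^ (-b)

/-- The Green function associated to `U` and `P`: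
`G(t,s) = U(t,s)P(s)` for `t > s` and `G(t,s) = -U_Q(t,s)Q(s)` for `t < s`. -/
def greenFunction (U V : ℝ → ℝ → X →L[ℝ] X) (P : ℝ → X →L[ℝ] X) (t s : ℝ) :
    X →L[ℝ] X :=
  if s < t then (U t s).comp (P s)
  else if t < s then -((V t s).comp (1 - P s))
  else 0

/-- Membership in the class `H^μ_{γ,p}(P)`. -/
def MemHClass (μ : ℝ → ℝ) (P : ℝ → X →L[ℝ] X) (γ p : ℝ) (H : ℝ → X →L[ℝ] X) : Prop :=
  (∀ x : X, ContinuousOn (fun t => H t x) (Set.Ici 0)) ∧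
  (∀ t, 0 ≤ t → ∀ x : X,
    ‖H t x‖ ≤ (deriv μ t / μ t) ^ (1 / p) * μ t ^ γ * ‖P t x‖ +
      (deriv μ t / μ t) ^ (1 / p) * μ t ^ (-γ) * ‖(1 - P t) x‖)

open ContinuousLinearMap

/-- The projection of `ℝ²` onto the first axis along the line spanned by `(-c, 1)`. -/
def skewProj (c : ℝ) : ℝ × ℝ →L[ℝ] ℝ × ℝ :=
  (fst ℝ ℝ ℝ + c • snd ℝ ℝ ℝ).prod 0

@[simp]
lemma skewProj_apply (c : ℝ) (x : ℝ × ℝ) : skewProj c x = (x.1 + c * x.2, 0) := rfl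

lemma one_sub_skewProj_apply (c : ℝ) (x : ℝ × ℝ) :
    (1 - skewProj c) x = (-(c * x.2), x.2) := by
  ext <;> simp

lemma skewProj_comp_skewProj (c d : ℝ) : (skewProj c).comp (skewProj d) = skewProj d := by
  ext <;> simp

lemma norm_skewProj {c : ℝ} (hc : 0 ≤ c) : ‖skewProj c‖ = 1 + c := by
  refine le_antisymm (opNorm_le_bound _ (by positivity) fun x => ?_) ?_
  · have h₁ : |x.1| ≤ ‖x‖ := norm_fst_le x
    have h₂ : |x.2| ≤ ‖x‖ := norm_snd_le x
    calc ‖skewProj c x‖ = |x.1 + c * x.2| := by simp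
      _ ≤ |x.1| + c * |x.2| := by simpa [abs_mul, abs_of_nonneg hc] using abs_add_le x.1 (c * x.2)
      _ ≤ (1 + c) * ‖x‖ := by nlinarith
  · simpa [abs_of_nonneg (by positivity : 0 ≤ 1 + c)] using (skewProj c).le_opNorm (1, 1)

lemma norm_one_sub_skewProj (c : ℝ) : ‖1 - skewProj c‖ = max |c| 1 := by
  refine le_antisymm (opNorm_le_bound _ (by positivity) fun x => ?_) ?_
  · have h₂ : |x.2| ≤ ‖x‖ := norm_snd_le x
    rw [one_sub_skewProj_apply, Prod.norm_mk, norm_neg, norm_mul,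
      max_mul_of_nonneg _ _ (norm_nonneg _)]
    exact max_le_max (by simpa using mul_le_mul_of_nonneg_left h₂ (abs_nonneg c))
      (by simpa using h₂)
  · simpa [one_sub_skewProj_apply] using (1 - skewProj c).le_opNorm (0, 1)

lemma norm_skewProj_rpow_sub_one {m ε : ℝ} (hm : 1 ≤ m) (hε : 0 ≤ ε) :
    ‖skewProj (m ^ ε - 1)‖ = m ^ ε := by
  rw [norm_skewProj (sub_nonneg.2 (one_le_rpow hm hε)), add_sub_cancel]

lemma norm_one_sub_skewProj_rpow_sub_one_le {m m' ε : ℝ} (hm : 1 ≤ m) (hmm' : m ≤ m')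
    (hε : 0 ≤ ε) : ‖1 - skewProj (m ^ ε - 1)‖ ≤ m' ^ ε := by
  have hm' : m ^ ε ≤ m' ^ ε := rpow_le_rpow (zero_le_one.trans hm) hmm' hε
  rw [norm_one_sub_skewProj, abs_of_nonneg (sub_nonneg.2 (one_le_rpow hm hε))]
  exact max_le (by linarith) (one_le_rpow (hm.trans hmm') hε)

lemma continuousOn_skewProj_apply {c : ℝ → ℝ} {s : Set ℝ} (hc : ContinuousOn c s) (x : ℝ × ℝ) :
    ContinuousOn (fun t => skewProj (c t) x) s := by
  simp only [skewProj_apply]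
  fun_prop

lemma one_sub_comp_of_comp_eq {p q : X →L[ℝ] X} (h : q.comp p = p) : (1 - q).comp p = 0 := by
  rw [sub_comp, h]
  exact sub_eq_zero.2 (id_comp p)

lemma comp_one_sub_self {p : X →L[ℝ] X} (h : p.comp p = p) : p.comp (1 - p) = 0 := by
  rw [comp_sub, h, sub_eq_zero]
  exact comp_id p

lemma one_sub_comp_one_sub_of_comp_eq {p q : X →L[ℝ] X} (h : q.comp p = p) :
    (1 - q).comp (1 - p) = 1 - q := by
  rw [comp_sub, one_sub_comp_of_comp_eq h, sub_zero]
  exact comp_id (1 - q)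

lemma rpow_div_mul_rpow_div {x y z : ℝ} (hx : 0 ≤ x) (hy : 0 < y) (hz : 0 ≤ z) (p : ℝ) :
    (y / x) ^ p * (z / y) ^ p = (z / x) ^ p := by
  rw [← Real.mul_rpow (by positivity) (by positivity), div_mul_div_cancel₀' hy.ne']

lemma rpow_neg_mul_rpow {x : ℝ} (hx : 0 < x) (p : ℝ) : x ^ (-p) * x ^ p = 1 := by
  rw [← Real.rpow_add hx, neg_add_cancel, Real.rpow_zero]

section CommonRange

variable {μ : ℝ → ℝ} {a b : ℝ} {P : ℝ → X →L[ℝ] X} {U : ℝ → ℝ → X →L[ℝ] X}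

/-- The inverse of `U(t,s)` restricted to `Q(s)X`, where `Q = 1 - P`. -/
def unstableInv (μ : ℝ → ℝ) (b : ℝ) (P : ℝ → X →L[ℝ] X) (s t : ℝ) : X →L[ℝ] X :=
  (μ t / μ s) ^ (-b) • (1 - P s)

lemma evolution_comp_proj
    (hP : ∀ s t, 0 ≤ s → 0 ≤ t → (P t).comp (P s) = P s)
    (hU : ∀ s t, 0 ≤ s → s ≤ t →
      U t s = (μ t / μ s) ^ (-a) • P s + (μ t / μ s) ^ b • (1 - P t))
    {s t : ℝ} (hs : 0 ≤ s) (hst : s ≤ t) :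
    (U t s).comp (P s) = (μ t / μ s) ^ (-a) • P s := by
  rw [hU s t hs hst, add_comp, smul_comp, smul_comp, hP s s hs hs,
    one_sub_comp_of_comp_eq (hP s t hs (hs.trans hst)), smul_zero, add_zero]

lemma evolution_comp_one_sub_proj
    (hP : ∀ s t, 0 ≤ s → 0 ≤ t → (P t).comp (P s) = P s)
    (hU : ∀ s t, 0 ≤ s → s ≤ t →
      U t s = (μ t / μ s) ^ (-a) • P s + (μ t / μ s) ^ b • (1 - P t))
    {s t : ℝ} (hs : 0 ≤ s) (hst : s ≤ t) :
    (U t s).comp (1 - P s) = (μ t / μ s) ^ b • (1 - P t) := by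
  rw [hU s t hs hst, add_comp, smul_comp, smul_comp, comp_one_sub_self (hP s s hs hs),
    one_sub_comp_one_sub_of_comp_eq (hP s t hs (hs.trans hst)), smul_zero, zero_add]

lemma isEvolutionOperator_of_commonRange
    (hμ : ∀ t, 0 ≤ t → 0 < μ t) (hμc : ContinuousOn μ (Set.Ici 0))
    (hP : ∀ s t, 0 ≤ s → 0 ≤ t → (P t).comp (P s) = P s)
    (hPc : ∀ x : X, ContinuousOn (fun t => P t x) (Set.Ici 0))
    (hU : ∀ s t, 0 ≤ s → s ≤ t →
      U t s = (μ t / μ s) ^ (-a) • P s + (μ t / μ s) ^ b • (1 - P t)) :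
    IsEvolutionOperator U := by
  refine ⟨fun t ht => ?_, fun s τ t hs hsτ hτt => ?_, fun x => ?_⟩
  · rw [hU t t ht le_rfl, div_self (hμ t ht).ne', Real.one_rpow, Real.one_rpow, one_smul,
      one_smul, add_sub_cancel]
  · have hτ := hs.trans hsτ
    have hUτ : (U t τ).comp (P s) = (μ t / μ τ) ^ (-a) • P s := by
      rw [← hP s τ hs hτ, ← comp_assoc, evolution_comp_proj hP hU hτ hτt, smul_comp]
    rw [hU s τ hs hsτ, comp_add, comp_smul, comp_smul, hUτ,
      evolution_comp_one_sub_proj hP hU hτ hτt, smul_smul, smul_smul,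
      rpow_div_mul_rpow_div (hμ s hs).le (hμ τ hτ) (hμ t (hτ.trans hτt)).le,
      rpow_div_mul_rpow_div (hμ s hs).le (hμ τ hτ) (hμ t (hτ.trans hτt)).le,
      hU s t hs (hsτ.trans hτt)]
  · set D := {q : ℝ × ℝ | 0 ≤ q.2 ∧ q.2 ≤ q.1}
    have hfst : Set.MapsTo Prod.fst D (Set.Ici 0) := fun q hq => hq.1.trans hq.2
    have hsnd : Set.MapsTo Prod.snd D (Set.Ici 0) := fun q hq => hq.1
    have hratio : ContinuousOn (fun q : ℝ × ℝ => μ q.1 / μ q.2) D :=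
      (hμc.comp continuous_fst.continuousOn hfst).div (hμc.comp continuous_snd.continuousOn hsnd)
        fun q hq => (hμ _ hq.1).ne'
    refine ContinuousOn.congr (f := fun q : ℝ × ℝ => (μ q.1 / μ q.2) ^ (-a) • P q.2 x +
        (μ q.1 / μ q.2) ^ b • (x - P q.1 x)) ?_ fun q hq => by simp [hU q.2 q.1 hq.1 hq.2]
    have hpos : ∀ p : ℝ, ∀ q ∈ D, μ q.1 / μ q.2 ≠ 0 ∨ 0 ≤ p := fun _ q hq =>
      Or.inl (div_pos (hμ _ (hfst hq)) (hμ _ hq.1)).ne'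
    exact ((hratio.rpow_const (hpos _)).smul ((hPc x).comp continuous_snd.continuousOn hsnd)).add
      ((hratio.rpow_const (hpos _)).smul
        (continuousOn_const.sub ((hPc x).comp continuous_fst.continuousOn hfst)))

lemma unstableInv_comp_one_sub_proj (hP : ∀ s t, 0 ≤ s → 0 ≤ t → (P t).comp (P s) = P s)
    {s t : ℝ} (hs : 0 ≤ s) (ht : 0 ≤ t) :
    (unstableInv μ b P s t).comp (1 - P t) = (μ t / μ s) ^ (-b) • (1 - P s) := by
  rw [unstableInv, smul_comp, one_sub_comp_one_sub_of_comp_eq (hP t s ht hs)]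

lemma compatibleProjection_unstableInv (hμ : ∀ t, 0 ≤ t → 0 < μ t)
    (hP : ∀ s t, 0 ≤ s → 0 ≤ t → (P t).comp (P s) = P s)
    (hU : ∀ s t, 0 ≤ s → s ≤ t →
      U t s = (μ t / μ s) ^ (-a) • P s + (μ t / μ s) ^ b • (1 - P t)) :
    CompatibleProjection U (unstableInv μ b P) P := by
  have hV : ∀ s t, 0 ≤ s → s ≤ t → ∀ x : X,
      unstableInv μ b P s t ((1 - P t) x) = (μ t / μ s) ^ (-b) • (1 - P s) x := fun s t hs hst x =>
    congrArg (· x) (unstableInv_comp_one_sub_proj hP hs (hs.trans hst))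
  have hUQ : ∀ s t, 0 ≤ s → s ≤ t → ∀ x : X,
      U t s ((1 - P s) x) = (μ t / μ s) ^ b • (1 - P t) x := fun s t hs hst x =>
    congrArg (· x) (evolution_comp_one_sub_proj hP hU hs hst)
  have hratio : ∀ s t, 0 ≤ s → s ≤ t → 0 < μ t / μ s := fun s t hs hst =>
    div_pos (hμ t (hs.trans hst)) (hμ s hs)
  refine ⟨fun s t hs hst => ?_, fun s t hs hst x => ?_, fun s t hs hst x => ?_,
    fun s t hs hst x => ?_⟩
  · have ht := hs.trans hst
    rw [evolution_comp_proj hP hU hs hst, hU s t hs hst, comp_add, comp_smul, comp_smul,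
      comp_one_sub_self (hP t t ht ht), hP s t hs ht, smul_zero, add_zero]
  · rw [hV s t hs hst, map_smul, ← comp_apply, one_sub_comp_one_sub_of_comp_eq (hP s s hs hs)]
  · rw [hV s t hs hst, map_smul, hUQ s t hs hst, smul_smul,
      rpow_neg_mul_rpow (hratio s t hs hst), one_smul]
  · rw [hUQ s t hs hst, map_smul, hV s t hs hst, smul_smul, mul_comm,
      rpow_neg_mul_rpow (hratio s t hs hst), one_smul]

lemma norm_evolution_comp_proj (hμ : ∀ t, 0 ≤ t → 0 < μ t)
    (hP : ∀ s t, 0 ≤ s → 0 ≤ t → (P t).comp (P s) = P s)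
    (hU : ∀ s t, 0 ≤ s → s ≤ t →
      U t s = (μ t / μ s) ^ (-a) • P s + (μ t / μ s) ^ b • (1 - P t))
    {s t : ℝ} (hs : 0 ≤ s) (hst : s ≤ t) :
    ‖(U t s).comp (P s)‖ = (μ t / μ s) ^ (-a) * ‖P s‖ := by
  have : 0 < μ t / μ s := div_pos (hμ t (hs.trans hst)) (hμ s hs)
  rw [evolution_comp_proj hP hU hs hst, norm_smul, Real.norm_of_nonneg (by positivity)]

lemma norm_unstableInv_comp_one_sub_proj (hμ : ∀ t, 0 ≤ t → 0 < μ t)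
    (hP : ∀ s t, 0 ≤ s → 0 ≤ t → (P t).comp (P s) = P s)
    {s t : ℝ} (hs : 0 ≤ s) (hst : s ≤ t) :
    ‖(unstableInv μ b P s t).comp (1 - P t)‖ = (μ t / μ s) ^ (-b) * ‖1 - P s‖ := by
  have : 0 < μ t / μ s := div_pos (hμ t (hs.trans hst)) (hμ s hs)
  rw [unstableInv_comp_one_sub_proj hP hs (hs.trans hst), norm_smul,
    Real.norm_of_nonneg (by positivity)]

end CommonRange

/-- Example 2.8 (first part): on `ℝ²` with the sup norm, with
`P(t)(x₁,x₂) = (x₁ + (μ(t)^ε − 1)x₂, 0)` and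
`U(t,s) = (μ(t)/μ(s))^{-a} P(s) + (μ(t)/μ(s))^{b} Q(t)`, the map `U` is an evolution
operator, `P` is a projection valued function compatible with `U`,
`‖U(t,s)P(s)‖ = (μ(t)/μ(s))^{-a} μ(s)^ε`, `‖U_Q(s,t)Q(t)‖ ≤ (μ(t)/μ(s))^{-b} μ(t)^ε`,
and `U` has a nonuniform μ-dichotomy with projection valued function `P`. -/
theorem example_nonuniform_mu_dichotomy
    (μ : ℝ → ℝ) (hgr : IsGrowthRate μ) (hcont : ContinuousOn μ (Set.Ici 0))
    (ε a b : ℝ) (hε : 0 ≤ ε) (ha : 0 < a) (hb : 0 < b)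
    (P : ℝ → (ℝ × ℝ) →L[ℝ] (ℝ × ℝ)) (U : ℝ → ℝ → (ℝ × ℝ) →L[ℝ] (ℝ × ℝ))
    (hPdef : ∀ t, 0 ≤ t → ∀ x : ℝ × ℝ, P t x = (x.1 + (μ t ^ ε - 1) * x.2, 0))
    (hUdef : ∀ s t, 0 ≤ s → s ≤ t → ∀ x : ℝ × ℝ,
      U t s x = (μ t / μ s) ^ (-a) • P s x + (μ t / μ s) ^ b • (1 - P t) x) :
    IsEvolutionOperator U ∧ IsProjectionValued P ∧
      ∃ V : ℝ → ℝ → (ℝ × ℝ) →L[ℝ] (ℝ × ℝ), CompatibleProjection U V P ∧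
        (∀ s t, 0 ≤ s → s ≤ t →
          ‖(U t s).comp (P s)‖ = (μ t / μ s) ^ (-a) * μ s ^ ε ∧
          ‖(V s t).comp (1 - P t)‖ ≤ (μ t / μ s) ^ (-b) * μ t ^ ε) ∧
        NonuniformMuDichotomy μ U V P := by
  obtain ⟨hμ1, hμmono, -, -⟩ := hgr
  have hμ : ∀ t, 0 ≤ t → 0 < μ t := fun t ht => one_pos.trans_le (hμ1 t ht)
  have hPeq : ∀ t, 0 ≤ t → P t = skewProj (μ t ^ ε - 1) := fun t ht => ext (hPdef t ht)
  have hP : ∀ s t, 0 ≤ s → 0 ≤ t → (P t).comp (P s) = P s := fun s t hs ht => by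
    rw [hPeq s hs, hPeq t ht, skewProj_comp_skewProj]
  have hU : ∀ s t, 0 ≤ s → s ≤ t →
      U t s = (μ t / μ s) ^ (-a) • P s + (μ t / μ s) ^ b • (1 - P t) := fun s t hs hst =>
    ext (hUdef s t hs hst)
  have hPc : ∀ x, ContinuousOn (fun t => P t x) (Set.Ici 0) := fun x =>
    (continuousOn_skewProj_apply (c := fun t => μ t ^ ε - 1)
      ((hcont.rpow_const fun _ _ => Or.inr hε).sub continuousOn_const) x).congr
      fun t ht => by rw [hPeq t ht]
  have hbounds : ∀ s t, 0 ≤ s → s ≤ t →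
      ‖(U t s).comp (P s)‖ = (μ t / μ s) ^ (-a) * μ s ^ ε ∧
      ‖(unstableInv μ b P s t).comp (1 - P t)‖ ≤ (μ t / μ s) ^ (-b) * μ t ^ ε := by
    intro s t hs hst
    refine ⟨?_, ?_⟩
    · rw [norm_evolution_comp_proj hμ hP hU hs hst, hPeq s hs,
        norm_skewProj_rpow_sub_one (hμ1 s hs) hε]
    · rw [norm_unstableInv_comp_one_sub_proj hμ hP hs hst, hPeq s hs]
      have : 0 < μ t / μ s := div_pos (hμ t (hs.trans hst)) (hμ s hs)
      gcongr
      exact norm_one_sub_skewProj_rpow_sub_one_le (hμ1 s hs) (hμmono hs (hs.trans hst) hst) hε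
  refine ⟨isEvolutionOperator_of_commonRange hμ hcont hP hPc hU, ⟨fun t ht => hP t t ht ht, hPc⟩,
    unstableInv μ b P, compatibleProjection_unstableInv hμ hP hU, hbounds,
    a, b, ε, 1, 1, ha, hb, hε, le_rfl, le_rfl, fun s t hs hst => ?_⟩
  simpa only [one_mul] using And.intro (hbounds s t hs hst).1.le (hbounds s t hs hst).2
end
end

section
/- Let μ : [0,∞) → [1,∞) be a continuous growth rate, ε > 0 and a,b > 0. On X = ℝ² with the norm ‖(x₁,x₂)‖ = max{|x₁|,|x₂|}, define P(t)(x₁,x₂) = (x₁ + (μ(t)^ε − 1)x₂, 0), Q(t) = Id − P(t), and U(t,s) = (μ(t)/μ(s))^{−a} P(s) + (μ(t)/μ(s))^{b} Q(t) for t ≥ s ≥ 0. Then there exist no constants ν > 0 and N ≥ 1 such that ‖U(t,s)P(s)‖ ≤ N (μ(t)/μ(s))^{−ν} for all t ≥ s ≥ 0; in particular U does not have a uniform μ-dichotomy with projection valued function P. -/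
open Real MeasureTheory Filter

noncomputable section

variable {X : Type*} [NormedAddCommGroup X] [NormedSpace ℝ X]

/-!
Taking `s = t`, the evolution operator collapses to `U(t,t) = P(t) + Q(t) = Id`, so a bound
`‖U(t,s)P(s)‖ ≤ N (μ(t)/μ(s))^{-ν}` would give `‖P(t)‖ ≤ N` for all `t`. But
`P(t)(0,1) = (μ(t)^ε - 1, 0)`, so `‖P(t)‖ ≥ μ(t)^ε - 1 → ∞`.
-/

theorem not_exists_uniform_bound_of_tendsto_norm_atTop (μ : ℝ → ℝ)
    (U : ℝ → ℝ → X →L[ℝ] X) (P : ℝ → X →L[ℝ] X)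
    (hU : ∀ t, 0 ≤ t → U t t = 1) (hμ : Tendsto μ atTop atTop)
    (hP : Tendsto (fun t => ‖P t‖) atTop atTop) :
    ¬ ∃ ν N : ℝ, 0 < ν ∧ 1 ≤ N ∧ ∀ s t, 0 ≤ s → s ≤ t →
      ‖(U t s).comp (P s)‖ ≤ N * (μ t / μ s) ^ (-ν) := by
  rintro ⟨ν, N, -, -, hbound⟩
  obtain ⟨t, ht, hμt, hPt⟩ := ((eventually_ge_atTop 0).and
    ((hμ.eventually_gt_atTop 0).and (hP.eventually_gt_atTop N))).exists
  have h := hbound t t ht le_rfl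
  rw [hU t ht, ContinuousLinearMap.one_def, ContinuousLinearMap.id_comp, div_self hμt.ne',
    one_rpow, mul_one] at h
  exact h.not_gt hPt

theorem evolution_diag_eq_one (μ : ℝ → ℝ) (a b : ℝ) (P : ℝ → X →L[ℝ] X)
    (U : ℝ → ℝ → X →L[ℝ] X)
    (hμ : ∀ t, 0 ≤ t → μ t ≠ 0)
    (hUdef : ∀ s t, 0 ≤ s → s ≤ t → ∀ x : X,
      U t s x = (μ t / μ s) ^ (-a) • P s x + (μ t / μ s) ^ b • (1 - P t) x)
    (t : ℝ) (ht : 0 ≤ t) : U t t = 1 := by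
  ext x
  simp [hUdef t t ht le_rfl, div_self (hμ t ht)]

theorem le_opNorm_of_apply_eq_add_mul_snd (c : ℝ) (L : (ℝ × ℝ) →L[ℝ] (ℝ × ℝ))
    (hL : ∀ x : ℝ × ℝ, L x = (x.1 + c * x.2, 0)) : c ≤ ‖L‖ := by
  have h := L.unit_le_opNorm ((0 : ℝ), (1 : ℝ)) (by simp [Prod.norm_def])
  rw [hL] at h
  simp only [zero_add, mul_one, Prod.norm_def, norm_zero] at h
  exact (le_abs_self c).trans ((le_max_left _ _).trans h)

theorem example_not_uniform_mu_dichotomy_general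
    (μ : ℝ → ℝ) (hgr : IsGrowthRate μ)
    (ε a b : ℝ) (hε : 0 < ε)
    (P : ℝ → (ℝ × ℝ) →L[ℝ] (ℝ × ℝ)) (U : ℝ → ℝ → (ℝ × ℝ) →L[ℝ] (ℝ × ℝ))
    (hPdef : ∀ t, 0 ≤ t → ∀ x : ℝ × ℝ, P t x = (x.1 + (μ t ^ ε - 1) * x.2, 0))
    (hUdef : ∀ s t, 0 ≤ s → s ≤ t → ∀ x : ℝ × ℝ,
      U t s x = (μ t / μ s) ^ (-a) • P s x + (μ t / μ s) ^ b • (1 - P t) x) :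
    (¬ ∃ ν N : ℝ, 0 < ν ∧ 1 ≤ N ∧ ∀ s t, 0 ≤ s → s ≤ t →
        ‖(U t s).comp (P s)‖ ≤ N * (μ t / μ s) ^ (-ν)) ∧
    (∀ V : ℝ → ℝ → (ℝ × ℝ) →L[ℝ] (ℝ × ℝ), CompatibleProjection U V P →
        ¬ UniformMuDichotomy μ U V P) := by
  obtain ⟨hμ_ge_one, -, -, hμ⟩ := hgr
  have hU : ∀ t, 0 ≤ t → U t t = 1 := evolution_diag_eq_one μ a b P U
    (fun t ht => (zero_lt_one.trans_le (hμ_ge_one t ht)).ne') hUdef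
  have hP : Tendsto (fun t => ‖P t‖) atTop atTop := by
    have hμε : Tendsto (fun t => μ t ^ ε - 1) atTop atTop :=
      tendsto_atTop_add_const_right _ (-1) ((tendsto_rpow_atTop hε).comp hμ)
    refine tendsto_atTop_mono' _ ?_ hμε
    filter_upwards [eventually_ge_atTop 0] with t ht
    exact le_opNorm_of_apply_eq_add_mul_snd _ (P t) (hPdef t ht)
  have hno_bound := not_exists_uniform_bound_of_tendsto_norm_atTop μ U P hU hμ hP
  refine ⟨hno_bound, fun V _ ⟨ν, _, N, _, hν, _, hN, _, hdich⟩ => ?_⟩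
  exact hno_bound ⟨ν, N, hν, hN, fun s t hs hst => (hdich s t hs hst).1⟩

/-- Example 2.8 (second part): with `ε > 0`, the evolution operator
`U(t,s) = (μ(t)/μ(s))^{-a} P(s) + (μ(t)/μ(s))^{b} Q(t)` admits no constants `ν > 0`,
`N ≥ 1` with `‖U(t,s)P(s)‖ ≤ N (μ(t)/μ(s))^{-ν}` for all `t ≥ s ≥ 0`; in particular
`U` does not have a uniform μ-dichotomy with projection valued function `P`. -/
theorem example_not_uniform_mu_dichotomy
    (μ : ℝ → ℝ) (hgr : IsGrowthRate μ)
    (ε a b : ℝ) (hε : 0 < ε) (ha : 0 < a) (hb : 0 < b)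
    (P : ℝ → (ℝ × ℝ) →L[ℝ] (ℝ × ℝ)) (U : ℝ → ℝ → (ℝ × ℝ) →L[ℝ] (ℝ × ℝ))
    (hPdef : ∀ t, 0 ≤ t → ∀ x : ℝ × ℝ, P t x = (x.1 + (μ t ^ ε - 1) * x.2, 0))
    (hUdef : ∀ s t, 0 ≤ s → s ≤ t → ∀ x : ℝ × ℝ,
      U t s x = (μ t / μ s) ^ (-a) • P s x + (μ t / μ s) ^ b • (1 - P t) x) :
    (¬ ∃ ν N : ℝ, 0 < ν ∧ 1 ≤ N ∧ ∀ s t, 0 ≤ s → s ≤ t →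
        ‖(U t s).comp (P s)‖ ≤ N * (μ t / μ s) ^ (-ν)) ∧
    (∀ V : ℝ → ℝ → (ℝ × ℝ) →L[ℝ] (ℝ × ℝ), CompatibleProjection U V P →
        ¬ UniformMuDichotomy μ U V P) :=
  example_not_uniform_mu_dichotomy_general μ hgr ε a b hε P U hPdef hUdef
end
end

section
/- Let p > 0 and let μ : [0,∞) → [1,∞) be a differentiable growth rate. If the evolution operator U : Δ → B(X) has a nonuniform μ-dichotomy with projection valued function P (with constants a,b > 0, ε ≥ 0, N₁,N₂ ≥ 1), then for every 0 < γ < min{a,b} and every t ≥ 0, x ∈ X: ∫₀^{+∞} (μ'(τ)/μ(τ)) (μ(τ)/μ(t))^{pγ·sign(τ−t)} ‖G(τ,t)x‖^p dτ ≤ D μ(t)^{pε} ‖x‖^p, where D = N₁^p/(p(a−γ)) + N₂^p/(p(b−γ)). -/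
open Real MeasureTheory Filter

noncomputable section

variable {X : Type*} [NormedAddCommGroup X] [NormedSpace ℝ X]

/-!
Split the integral at `τ = t`. For `τ > t` the stable estimate gives
`‖G(τ,t)x‖ ≤ N₁ (μ(τ)/μ(t))^{-a} μ(t)^ε ‖x‖`, for `τ < t` the unstable one gives
`‖G(τ,t)x‖ ≤ N₂ (μ(t)/μ(τ))^{-b} μ(t)^ε ‖x‖`; after the weight `(μ(τ)/μ(t))^{±pγ}` each half
is at most `N^p μ(t)^{pε} ‖x‖^p` times `∫ (μ'/μ) (μ/μ(t))^e` with `e = -p(a-γ)`, resp.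
`e = p(b-γ)`. The function `(μ/μ(t))^e / e` is a monotone antiderivative of that weight taking
values between `0` and `1/e` on the half in question, so by the change of variables formula the
weight integral is at most `1/|e|`.
-/

open Set

theorem IsGrowthRate.pos {μ : ℝ → ℝ} (hμ : IsGrowthRate μ) {t : ℝ} (ht : 0 ≤ t) : 0 < μ t :=
  zero_lt_one.trans_le (hμ.1 t ht)

theorem IsGrowthRate.deriv_nonneg {μ : ℝ → ℝ} (hμ : IsGrowthRate μ) {t : ℝ} (ht : 0 < t) :
    0 ≤ deriv μ t := by
  rw [← derivWithin_of_mem_nhds (Ici_mem_nhds ht)]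
  exact hμ.2.1.derivWithin_nonneg

theorem monotoneOn_rpow_div_self {f : ℝ → ℝ} {s : Set ℝ} (hf : MonotoneOn f s)
    (hpos : ∀ x ∈ s, 0 < f x) {e : ℝ} (he : e ≠ 0) : MonotoneOn (fun x => f x ^ e / e) s := by
  intro x hx y hy hxy
  rcases he.lt_or_gt with he | he
  · exact div_le_div_of_nonpos_of_le he.le
      (Real.rpow_le_rpow_of_nonpos (hpos x hx) (hf hx hy hxy) he.le)
  · exact div_le_div_of_nonneg_right
      (Real.rpow_le_rpow (hpos x hx).le (hf hx hy hxy) he.le) he.le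

theorem hasDerivAt_div_rpow_div_self {μ : ℝ → ℝ} {τ c e : ℝ} (hμ : DifferentiableAt ℝ μ τ)
    (hμτ : 0 < μ τ) (hc : 0 < c) (he : e ≠ 0) :
    HasDerivAt (fun σ => (μ σ / c) ^ e / e) (deriv μ τ / μ τ * (μ τ / c) ^ e) τ := by
  have h := ((hμ.hasDerivAt.div_const c).rpow_const (p := e)
    (Or.inl (div_pos hμτ hc).ne')).div_const e
  refine h.congr_deriv ?_
  rw [Real.rpow_sub (div_pos hμτ hc), Real.rpow_one]
  field_simp

theorem lintegral_ofReal_deriv_le_of_monotoneOn {F F' : ℝ → ℝ} {s : Set ℝ} {α β : ℝ}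
    (hs : MeasurableSet s) (hF' : ∀ x ∈ s, HasDerivAt F (F' x) x) (hF : MonotoneOn F s)
    (hmaps : MapsTo F s (uIcc α β)) :
    ∫⁻ x in s, ENNReal.ofReal (F' x) ≤ ENNReal.ofReal |β - α| := by
  rw [lintegral_deriv_eq_volume_image_of_monotoneOn hs
    (fun x hx => (hF' x hx).hasDerivWithinAt) hF, ← Real.volume_interval]
  exact measure_mono hmaps.image_subset

theorem lintegral_ofReal_growth_weight_le {μ : ℝ → ℝ} (hμ : IsGrowthRate μ)
    (hdiff : ∀ t, 0 ≤ t → DifferentiableAt ℝ μ t) {s : Set ℝ} (hs : MeasurableSet s)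
    (hs0 : s ⊆ Ioi 0) {c e : ℝ} (hc : 0 < c) (he : e ≠ 0)
    (hle : ∀ τ ∈ s, (μ τ / c) ^ e ≤ 1) :
    ∫⁻ τ in s, ENNReal.ofReal (deriv μ τ / μ τ * (μ τ / c) ^ e) ≤ ENNReal.ofReal (1 / |e|) := by
  have hpos : ∀ τ ∈ s, 0 < μ τ := fun τ hτ => hμ.pos (hs0 hτ).le
  have hmono : MonotoneOn (fun τ => μ τ / c) s := fun x hx y hy hxy =>
    div_le_div_of_nonneg_right (hμ.2.1 (mem_Ici.2 (hs0 hx).le) (mem_Ici.2 (hs0 hy).le) hxy) hc.le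
  have hmaps : MapsTo (fun τ => (μ τ / c) ^ e / e) s (uIcc 0 (1 / e)) := by
    intro τ hτ
    rw [← zero_div e, ← image_div_const_uIcc]
    refine mem_image_of_mem _ (Icc_subset_uIcc ⟨?_, hle τ hτ⟩)
    exact Real.rpow_nonneg (div_pos (hpos τ hτ) hc).le e
  have h := lintegral_ofReal_deriv_le_of_monotoneOn hs
    (fun τ hτ => hasDerivAt_div_rpow_div_self (hdiff τ (hs0 hτ).le) (hpos τ hτ) hc he)
    (monotoneOn_rpow_div_self hmono (fun τ hτ => div_pos (hpos τ hτ) hc) he) hmaps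
  rwa [sub_zero, abs_div, abs_one] at h

theorem setLIntegral_ofReal_le_of_le_const_mul {α : Type*} [MeasurableSpace α]
    {ν : Measure α} {s : Set α} (hs : MeasurableSet s) {f w : α → ℝ} {K B : ℝ} (hK : 0 ≤ K)
    (hfw : ∀ x ∈ s, f x ≤ K * w x) (hw : ∫⁻ x in s, ENNReal.ofReal (w x) ∂ν ≤ ENNReal.ofReal B) :
    ∫⁻ x in s, ENNReal.ofReal (f x) ∂ν ≤ ENNReal.ofReal (K * B) :=
  calc ∫⁻ x in s, ENNReal.ofReal (f x) ∂ν
      ≤ ∫⁻ x in s, ENNReal.ofReal K * ENNReal.ofReal (w x) ∂ν :=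
        setLIntegral_mono_ae' hs (ae_of_all _ fun x hx => by
          rw [← ENNReal.ofReal_mul hK]; exact ENNReal.ofReal_le_ofReal (hfw x hx))
    _ = ENNReal.ofReal K * ∫⁻ x in s, ENNReal.ofReal (w x) ∂ν :=
        lintegral_const_mul' _ _ ENNReal.ofReal_ne_top
    _ ≤ ENNReal.ofReal (K * B) := by
        rw [ENNReal.ofReal_mul hK]; gcongr

theorem rpow_mul_rpow_le_of_le_mul_rpow_neg {r N m y a γ p : ℝ} (hr : 0 < r) (hN : 0 ≤ N)
    (hm : 0 ≤ m) (hp : 0 ≤ p) (hy0 : 0 ≤ y) (hy : y ≤ N * r ^ (-a) * m) :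
    r ^ (p * γ) * y ^ p ≤ N ^ p * m ^ p * r ^ (-(p * (a - γ))) :=
  calc r ^ (p * γ) * y ^ p ≤ r ^ (p * γ) * (N * r ^ (-a) * m) ^ p := by gcongr
    _ = N ^ p * m ^ p * (r ^ (p * γ) * r ^ (-a * p)) := by
        rw [Real.mul_rpow (by positivity) hm, Real.mul_rpow hN (by positivity),
          ← Real.rpow_mul hr.le]
        ring
    _ = N ^ p * m ^ p * r ^ (-(p * (a - γ))) := by
        rw [← Real.rpow_add hr]; ring_nf

theorem norm_greenFunction_apply_le_of_lt {μ : ℝ → ℝ} {U V : ℝ → ℝ → X →L[ℝ] X}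
    {P : ℝ → X →L[ℝ] X} {a ε N₁ : ℝ}
    (hdich₁ : ∀ s t, 0 ≤ s → s ≤ t →
      ‖(U t s).comp (P s)‖ ≤ N₁ * (μ t / μ s) ^ (-a) * μ s ^ ε)
    {t τ : ℝ} (ht : 0 ≤ t) (htτ : t < τ) (x : X) :
    ‖greenFunction U V P τ t x‖ ≤ N₁ * (μ τ / μ t) ^ (-a) * μ t ^ ε * ‖x‖ := by
  rw [greenFunction, if_pos htτ]
  exact ((U τ t).comp (P t)).le_of_opNorm_le (hdich₁ t τ ht htτ.le) x

theorem norm_greenFunction_apply_le_of_gt {μ : ℝ → ℝ} {U V : ℝ → ℝ → X →L[ℝ] X}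
    {P : ℝ → X →L[ℝ] X} {b ε N₂ : ℝ}
    (hdich₂ : ∀ s t, 0 ≤ s → s ≤ t →
      ‖(V s t).comp (1 - P t)‖ ≤ N₂ * (μ t / μ s) ^ (-b) * μ t ^ ε)
    {t τ : ℝ} (hτ : 0 ≤ τ) (hτt : τ < t) (x : X) :
    ‖greenFunction U V P τ t x‖ ≤ N₂ * (μ t / μ τ) ^ (-b) * μ t ^ ε * ‖x‖ := by
  rw [greenFunction, if_neg hτt.not_gt, if_pos hτt, neg_apply, norm_neg]
  exact ((V τ t).comp (1 - P t)).le_of_opNorm_le (hdich₂ τ t hτ hτt.le) x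

theorem lintegral_Ioi_weighted_greenFunction_le {μ : ℝ → ℝ} (hμ : IsGrowthRate μ)
    (hdiff : ∀ t, 0 ≤ t → DifferentiableAt ℝ μ t) {p : ℝ} (hp : 0 < p)
    {U V : ℝ → ℝ → X →L[ℝ] X} {P : ℝ → X →L[ℝ] X} {a ε N₁ γ : ℝ} (hN₁ : 0 ≤ N₁)
    (hdich₁ : ∀ s t, 0 ≤ s → s ≤ t →
      ‖(U t s).comp (P s)‖ ≤ N₁ * (μ t / μ s) ^ (-a) * μ s ^ ε)
    (hγ : γ < a) {t : ℝ} (ht : 0 ≤ t) (x : X) :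
    ∫⁻ τ in Ioi t, ENNReal.ofReal
        (deriv μ τ / μ τ * (μ τ / μ t) ^ (p * γ * Real.sign (τ - t)) *
          ‖greenFunction U V P τ t x‖ ^ p)
      ≤ ENNReal.ofReal (N₁ ^ p * (μ t ^ ε * ‖x‖) ^ p / (p * (a - γ))) := by
  have hc : 0 < p * (a - γ) := mul_pos hp (sub_pos.2 hγ)
  have hμt := hμ.pos ht
  have hle : ∀ τ ∈ Ioi t, (μ τ / μ t) ^ (-(p * (a - γ))) ≤ 1 := fun τ hτ =>
    Real.rpow_le_one_of_one_le_of_nonpos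
      ((one_le_div hμt).2 (hμ.2.1 (mem_Ici.2 ht) (mem_Ici.2 (ht.trans hτ.le)) hτ.le))
      (neg_nonpos.2 hc.le)
  refine (setLIntegral_ofReal_le_of_le_const_mul measurableSet_Ioi
    (K := N₁ ^ p * (μ t ^ ε * ‖x‖) ^ p) (by positivity) ?_
    (lintegral_ofReal_growth_weight_le hμ hdiff measurableSet_Ioi (Ioi_subset_Ioi ht) hμt
      (neg_ne_zero.2 hc.ne') hle)).trans_eq ?_
  swap
  · rw [abs_neg, abs_of_pos hc, ← div_eq_mul_one_div]
  intro τ (hτ : t < τ)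
  have hτ0 : 0 < τ := ht.trans_lt hτ
  have hr : 0 < μ τ / μ t := div_pos (hμ.pos hτ0.le) hμt
  have hd : 0 ≤ deriv μ τ / μ τ := div_nonneg (hμ.deriv_nonneg hτ0) (hμ.pos hτ0.le).le
  have hG : (μ τ / μ t) ^ (p * γ) * ‖greenFunction U V P τ t x‖ ^ p
      ≤ N₁ ^ p * (μ t ^ ε * ‖x‖) ^ p * (μ τ / μ t) ^ (-(p * (a - γ))) :=
    rpow_mul_rpow_le_of_le_mul_rpow_neg hr hN₁ (by positivity) hp.le (norm_nonneg _)
    ((norm_greenFunction_apply_le_of_lt hdich₁ ht hτ x).trans_eq (mul_assoc _ _ _))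
  rw [Real.sign_of_pos (sub_pos.2 hτ), mul_one]
  calc deriv μ τ / μ τ * (μ τ / μ t) ^ (p * γ) * ‖greenFunction U V P τ t x‖ ^ p
      = deriv μ τ / μ τ * ((μ τ / μ t) ^ (p * γ) * ‖greenFunction U V P τ t x‖ ^ p) :=
        mul_assoc _ _ _
    _ ≤ deriv μ τ / μ τ * (N₁ ^ p * (μ t ^ ε * ‖x‖) ^ p * (μ τ / μ t) ^ (-(p * (a - γ)))) :=
        mul_le_mul_of_nonneg_left hG hd
    _ = _ := by ring

theorem lintegral_Ioo_weighted_greenFunction_le {μ : ℝ → ℝ} (hμ : IsGrowthRate μ)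
    (hdiff : ∀ t, 0 ≤ t → DifferentiableAt ℝ μ t) {p : ℝ} (hp : 0 < p)
    {U V : ℝ → ℝ → X →L[ℝ] X} {P : ℝ → X →L[ℝ] X} {b ε N₂ γ : ℝ} (hN₂ : 0 ≤ N₂)
    (hdich₂ : ∀ s t, 0 ≤ s → s ≤ t →
      ‖(V s t).comp (1 - P t)‖ ≤ N₂ * (μ t / μ s) ^ (-b) * μ t ^ ε)
    (hγ : γ < b) {t : ℝ} (ht : 0 ≤ t) (x : X) :
    ∫⁻ τ in Ioo 0 t, ENNReal.ofReal
        (deriv μ τ / μ τ * (μ τ / μ t) ^ (p * γ * Real.sign (τ - t)) *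
          ‖greenFunction U V P τ t x‖ ^ p)
      ≤ ENNReal.ofReal (N₂ ^ p * (μ t ^ ε * ‖x‖) ^ p / (p * (b - γ))) := by
  have hc : 0 < p * (b - γ) := mul_pos hp (sub_pos.2 hγ)
  have hμt := hμ.pos ht
  have hle : ∀ τ ∈ Ioo 0 t, (μ τ / μ t) ^ (p * (b - γ)) ≤ 1 := fun τ hτ =>
    Real.rpow_le_one (div_nonneg (hμ.pos hτ.1.le).le hμt.le)
      ((div_le_one hμt).2 (hμ.2.1 (mem_Ici.2 hτ.1.le) (mem_Ici.2 ht) hτ.2.le)) hc.le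
  refine (setLIntegral_ofReal_le_of_le_const_mul measurableSet_Ioo
    (K := N₂ ^ p * (μ t ^ ε * ‖x‖) ^ p) (by positivity) ?_
    (lintegral_ofReal_growth_weight_le hμ hdiff measurableSet_Ioo Ioo_subset_Ioi_self hμt
      hc.ne' hle)).trans_eq ?_
  swap
  · rw [abs_of_pos hc, ← div_eq_mul_one_div]
  rintro τ ⟨hτ0, hτ⟩
  have hμτ := hμ.pos hτ0.le
  have hd : 0 ≤ deriv μ τ / μ τ := div_nonneg (hμ.deriv_nonneg hτ0) hμτ.le
  have hG : (μ t / μ τ) ^ (p * γ) * ‖greenFunction U V P τ t x‖ ^ p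
      ≤ N₂ ^ p * (μ t ^ ε * ‖x‖) ^ p * (μ t / μ τ) ^ (-(p * (b - γ))) :=
    rpow_mul_rpow_le_of_le_mul_rpow_neg (div_pos hμt hμτ) hN₂ (by positivity) hp.le
      (norm_nonneg _) ((norm_greenFunction_apply_le_of_gt hdich₂ hτ0.le hτ x).trans_eq
        (mul_assoc _ _ _))
  rw [Real.rpow_neg_eq_inv_rpow, inv_div] at hG
  rw [Real.sign_of_neg (sub_neg.2 hτ), mul_neg_one, Real.rpow_neg_eq_inv_rpow, inv_div]
  calc deriv μ τ / μ τ * (μ t / μ τ) ^ (p * γ) * ‖greenFunction U V P τ t x‖ ^ p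
      = deriv μ τ / μ τ * ((μ t / μ τ) ^ (p * γ) * ‖greenFunction U V P τ t x‖ ^ p) :=
        mul_assoc _ _ _
    _ ≤ deriv μ τ / μ τ * (N₂ ^ p * (μ t ^ ε * ‖x‖) ^ p * (μ τ / μ t) ^ (p * (b - γ))) :=
        mul_le_mul_of_nonneg_left hG hd
    _ = _ := by ring

theorem dichotomy_implies_integral_estimate_general
    {X : Type*} [NormedAddCommGroup X] [NormedSpace ℝ X]
    (μ : ℝ → ℝ) (hgr : IsGrowthRate μ)
    (hdiff : ∀ t, 0 ≤ t → DifferentiableAt ℝ μ t)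
    (p : ℝ) (hp : 0 < p)
    (U V : ℝ → ℝ → X →L[ℝ] X) (P : ℝ → X →L[ℝ] X)
    (a b ε N₁ N₂ : ℝ)
    (hN₁ : 1 ≤ N₁) (hN₂ : 1 ≤ N₂)
    (hdich₁ : ∀ s t, 0 ≤ s → s ≤ t →
      ‖(U t s).comp (P s)‖ ≤ N₁ * (μ t / μ s) ^ (-a) * μ s ^ ε)
    (hdich₂ : ∀ s t, 0 ≤ s → s ≤ t →
      ‖(V s t).comp (1 - P t)‖ ≤ N₂ * (μ t / μ s) ^ (-b) * μ t ^ ε)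
    (γ : ℝ) (hγ : γ < min a b) (t : ℝ) (ht : 0 ≤ t) (x : X) :
    ∫⁻ τ in Set.Ioi (0 : ℝ), ENNReal.ofReal
        (deriv μ τ / μ τ * (μ τ / μ t) ^ (p * γ * Real.sign (τ - t)) *
          ‖greenFunction U V P τ t x‖ ^ p)
      ≤ ENNReal.ofReal ((N₁ ^ p / (p * (a - γ)) + N₂ ^ p / (p * (b - γ))) *
          μ t ^ (p * ε) * ‖x‖ ^ p) := by
  have hγa : γ < a := hγ.trans_le (min_le_left a b)
  have hγb : γ < b := hγ.trans_le (min_le_right a b)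
  have hN₁0 : 0 ≤ N₁ := zero_le_one.trans hN₁
  have hN₂0 : 0 ≤ N₂ := zero_le_one.trans hN₂
  have hμt : 0 ≤ μ t := (hgr.pos ht).le
  have hm0 : 0 ≤ μ t ^ ε * ‖x‖ := mul_nonneg (Real.rpow_nonneg hμt ε) (norm_nonneg x)
  have hm : (μ t ^ ε * ‖x‖) ^ p = μ t ^ (p * ε) * ‖x‖ ^ p := by
    rw [Real.mul_rpow (Real.rpow_nonneg hμt ε) (norm_nonneg x), ← Real.rpow_mul hμt, mul_comm ε]
  calc _ = ∫⁻ τ in Ioo 0 t ∪ Ioi t, ENNReal.ofReal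
        (deriv μ τ / μ τ * (μ τ / μ t) ^ (p * γ * Real.sign (τ - t)) *
          ‖greenFunction U V P τ t x‖ ^ p) := by
        rw [← Ioc_union_Ioi_eq_Ioi ht]
        exact setLIntegral_congr (Ioo_ae_eq_Ioc.union ae_eq_rfl).symm
    _ ≤ _ := lintegral_union_le _ _ _
    _ ≤ ENNReal.ofReal (N₂ ^ p * (μ t ^ ε * ‖x‖) ^ p / (p * (b - γ))) +
          ENNReal.ofReal (N₁ ^ p * (μ t ^ ε * ‖x‖) ^ p / (p * (a - γ))) :=
        add_le_add (lintegral_Ioo_weighted_greenFunction_le hgr hdiff hp hN₂0 hdich₂ hγb ht x)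
          (lintegral_Ioi_weighted_greenFunction_le hgr hdiff hp hN₁0 hdich₁ hγa ht x)
    _ = _ := by
        have hK₁ := mul_nonneg (Real.rpow_nonneg hN₁0 p) (Real.rpow_nonneg hm0 p)
        have hK₂ := mul_nonneg (Real.rpow_nonneg hN₂0 p) (Real.rpow_nonneg hm0 p)
        rw [← ENNReal.ofReal_add (div_nonneg hK₂ (mul_pos hp (sub_pos.2 hγb)).le)
          (div_nonneg hK₁ (mul_pos hp (sub_pos.2 hγa)).le), hm]
        congr 1
        ring

/-- Theorem 3.1: if `U` has a nonuniform μ-dichotomy with projection valued function `P`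
(with constants `a, b, ε, N₁, N₂`), then for every `0 < γ < min{a,b}`, `t ≥ 0`, `x ∈ X`:
`∫₀^∞ (μ'(τ)/μ(τ)) (μ(τ)/μ(t))^{pγ sign(τ-t)} ‖G(τ,t)x‖^p dτ ≤ D μ(t)^{pε} ‖x‖^p`,
where `D = N₁^p/(p(a-γ)) + N₂^p/(p(b-γ))`. -/
theorem dichotomy_implies_integral_estimate
    {X : Type*} [NormedAddCommGroup X] [NormedSpace ℝ X] [CompleteSpace X]
    (μ : ℝ → ℝ) (hgr : IsGrowthRate μ)
    (hdiff : ∀ t, 0 ≤ t → DifferentiableAt ℝ μ t)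
    (p : ℝ) (hp : 0 < p)
    (U V : ℝ → ℝ → X →L[ℝ] X) (P : ℝ → X →L[ℝ] X)
    (hU : IsEvolutionOperator U) (hP : IsProjectionValued P)
    (hC : CompatibleProjection U V P)
    (a b ε N₁ N₂ : ℝ) (ha : 0 < a) (hb : 0 < b) (hε : 0 ≤ ε)
    (hN₁ : 1 ≤ N₁) (hN₂ : 1 ≤ N₂)
    (hdich₁ : ∀ s t, 0 ≤ s → s ≤ t →
      ‖(U t s).comp (P s)‖ ≤ N₁ * (μ t / μ s) ^ (-a) * μ s ^ ε)
    (hdich₂ : ∀ s t, 0 ≤ s → s ≤ t →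
      ‖(V s t).comp (1 - P t)‖ ≤ N₂ * (μ t / μ s) ^ (-b) * μ t ^ ε)
    (γ : ℝ) (hγ0 : 0 < γ) (hγ : γ < min a b) (t : ℝ) (ht : 0 ≤ t) (x : X) :
    ∫⁻ τ in Set.Ioi (0 : ℝ), ENNReal.ofReal
        (deriv μ τ / μ τ * (μ τ / μ t) ^ (p * γ * Real.sign (τ - t)) *
          ‖greenFunction U V P τ t x‖ ^ p)
      ≤ ENNReal.ofReal ((N₁ ^ p / (p * (a - γ)) + N₂ ^ p / (p * (b - γ))) *
          μ t ^ (p * ε) * ‖x‖ ^ p) :=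
  dichotomy_implies_integral_estimate_general μ hgr hdiff p hp U V P a b ε N₁ N₂ hN₁ hN₂ hdich₁
    hdich₂ γ hγ t ht x
end
end

section
/- Let μ : [0,∞) → [1,∞) be a differentiable growth rate with K_μ := sup_{t ≥ 0} μ'(t)/μ(t) < +∞. Let U : Δ → B(X) be an evolution operator and P a projection valued function compatible with U such that ‖G(t,s)‖ ≤ M (μ'(s)/μ(s)) (μ(t)/μ(s))^{ω·sign(t−s)} μ(s)^α for all t,s ≥ 0 with t ≠ s, for some ω > 0, α ≥ 0 and M ≥ 1. If there exist p ≥ 1, γ > α, ε ≥ 0 and D > 0 such that ∫₀^{+∞} (μ'(τ)/μ(τ)) (μ(τ)/μ(t))^{pγ·sign(τ−t)} ‖G(τ,t)x‖^p dτ ≤ D μ(t)^{pε} ‖x‖^p for every t ≥ 0 and x ∈ X, then U has a nonuniform μ-dichotomy with projection valued function P. -/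
open Real MeasureTheory Filter

noncomputable section

variable {X : Type*} [NormedAddCommGroup X] [NormedSpace ℝ X]

open scoped Topology

/-!
Write `ρ = μ'/μ ≤ K`. While `μ` grows by at most a factor `e`, the Green function is bounded by
`M K e^ω μ^α`. If `μ(t) > e μ(s)`, pick `r` with `μ(t) = e μ(r)`, so that `∫_r^t ρ = 1`. For
`τ ∈ (r,t)` the factorisation `U(t,s)P(s) = G(t,τ) G(τ,s)` and the near-diagonal bound give
`(μ(t)/μ(s))^γ μ(t)^{-α} ‖U(t,s)P(s)x‖ ≲ (μ(τ)/μ(s))^γ ‖G(τ,s)x‖`; averaging the `p`-th power over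
`(r,t)` against `ρ` and comparing with the integral estimate at `s` yields decay with exponent
`γ - α`. The unstable part is symmetric, with `μ(r) = e μ(s)` and
`U_Q(s,t) = U_Q(s,τ) U_Q(τ,t)`. At `t = s`, strong continuity of `U` bounds `P(s)`.
-/

namespace IsGrowthRate

variable {μ : ℝ → ℝ}

lemma pos_s7 (hμ : IsGrowthRate μ) {t : ℝ} (ht : 0 ≤ t) : 0 < μ t :=
  one_pos.trans_le (hμ.1 t ht)

lemma le_of_le (hμ : IsGrowthRate μ) {s t : ℝ} (hs : 0 ≤ s) (hst : s ≤ t) : μ s ≤ μ t :=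
  hμ.2.1 hs (hs.trans hst) hst

lemma logDeriv_nonneg (hμ : IsGrowthRate μ) {t : ℝ} (ht : 0 ≤ t)
    (hd : DifferentiableAt ℝ μ t) : 0 ≤ deriv μ t / μ t := by
  refine div_nonneg ?_ (hμ.pos_s7 ht).le
  rw [← hd.derivWithin (uniqueDiffOn_Ici 0 t ht)]
  exact hμ.2.1.derivWithin_nonneg

lemma lintegral_logDeriv_Ioo (hμ : IsGrowthRate μ)
    (hdiff : ∀ t, 0 ≤ t → DifferentiableAt ℝ μ t) {r t : ℝ} (hr : 0 ≤ r) (hrt : r ≤ t) :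
    ∫⁻ τ in Set.Ioo r t, ENNReal.ofReal (deriv μ τ / μ τ) =
      ENNReal.ofReal (log (μ t) - log (μ r)) := by
  have hlog : ∀ τ ∈ Set.Icc r t, HasDerivAt (fun τ => log (μ τ)) (deriv μ τ / μ τ) τ :=
    fun τ hτ => (hdiff τ (hr.trans hτ.1)).hasDerivAt.log (hμ.pos_s7 (hr.trans hτ.1)).ne'
  have hcont : ContinuousOn (fun τ => log (μ τ)) (Set.Icc r t) :=
    fun τ hτ => (hlog τ hτ).continuousAt.continuousWithinAt
  have hnonneg : ∀ τ ∈ Set.Ioo r t, 0 ≤ deriv μ τ / μ τ := fun τ hτ =>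
    hμ.logDeriv_nonneg (hr.trans hτ.1.le) (hdiff τ (hr.trans hτ.1.le))
  have hint : IntegrableOn (fun τ => deriv μ τ / μ τ) (Set.Ioc r t) :=
    intervalIntegral.integrableOn_deriv_of_nonneg hcont
      (fun τ hτ => hlog τ (Set.Ioo_subset_Icc_self hτ)) hnonneg
  rw [← ofReal_integral_eq_lintegral_ofReal (hint.mono_set Set.Ioo_subset_Ioc_self)
      ((ae_restrict_mem measurableSet_Ioo).mono hnonneg),
    integral_Ioc_eq_integral_Ioo.symm, ← intervalIntegral.integral_of_le hrt,
    intervalIntegral.integral_eq_sub_of_hasDerivAt_of_le hrt hcont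
      (fun τ hτ => hlog τ (Set.Ioo_subset_Icc_self hτ))
      ((intervalIntegrable_iff_integrableOn_Ioc_of_le hrt).2 hint)]

lemma nonneg_of_logDeriv_le {K : ℝ} (hμ : IsGrowthRate μ)
    (hdiff : ∀ t, 0 ≤ t → DifferentiableAt ℝ μ t) (hK : ∀ t, 0 ≤ t → deriv μ t / μ t ≤ K) :
    0 ≤ K :=
  (hμ.logDeriv_nonneg le_rfl (hdiff 0 le_rfl)).trans (hK 0 le_rfl)

lemma le_mul_of_lintegral_le (hμ : IsGrowthRate μ)
    (hdiff : ∀ t, 0 ≤ t → DifferentiableAt ℝ μ t) {r t : ℝ} (hr : 0 ≤ r) (hrt : r ≤ t)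
    (hgap : μ t = exp 1 * μ r) {c L B : ℝ} {F : ℝ → ℝ} (hc : 0 ≤ c) (hL : 0 ≤ L)
    (hB : 0 ≤ B) (hF : ∀ τ ∈ Set.Ioo r t, c * (deriv μ τ / μ τ) ≤ L * F τ)
    (hFint : ∫⁻ τ in Set.Ioi 0, ENNReal.ofReal (F τ) ≤ ENNReal.ofReal B) :
    c ≤ L * B := by
  have hunit : ∫⁻ τ in Set.Ioo r t, ENNReal.ofReal (deriv μ τ / μ τ) = 1 := by
    rw [hμ.lintegral_logDeriv_Ioo hdiff hr hrt, hgap,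
      log_mul (exp_pos 1).ne' (hμ.pos_s7 hr).ne', log_exp, add_sub_cancel_right,
      ENNReal.ofReal_one]
  rw [← ENNReal.ofReal_le_ofReal_iff (mul_nonneg hL hB)]
  calc ENNReal.ofReal c
      = ∫⁻ τ in Set.Ioo r t, ENNReal.ofReal (c * (deriv μ τ / μ τ)) := by
        simp_rw [ENNReal.ofReal_mul hc]
        rw [lintegral_const_mul' _ _ ENNReal.ofReal_ne_top, hunit, mul_one]
    _ ≤ ∫⁻ τ in Set.Ioo r t, ENNReal.ofReal (L * F τ) :=
        setLIntegral_mono' measurableSet_Ioo fun τ hτ => ENNReal.ofReal_le_ofReal (hF τ hτ)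
    _ = ENNReal.ofReal L * ∫⁻ τ in Set.Ioo r t, ENNReal.ofReal (F τ) := by
        simp_rw [ENNReal.ofReal_mul hL]
        exact lintegral_const_mul' _ _ ENNReal.ofReal_ne_top
    _ ≤ ENNReal.ofReal L * ∫⁻ τ in Set.Ioi 0, ENNReal.ofReal (F τ) :=
        mul_le_mul_right (lintegral_mono_set fun τ hτ => hr.trans_lt hτ.1) _
    _ ≤ ENNReal.ofReal (L * B) := by
        rw [ENNReal.ofReal_mul hL]
        exact mul_le_mul_right hFint _

lemma le_of_forall_le_weighted (hμ : IsGrowthRate μ)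
    (hdiff : ∀ t, 0 ≤ t → DifferentiableAt ℝ μ t) {r t : ℝ} (hr : 0 ≤ r) (hrt : r ≤ t)
    (hgap : μ t = exp 1 * μ r) {b p γ ε D n A L : ℝ} {g : ℝ → ℝ} (hb : 0 ≤ b) (hp : 0 < p)
    (hD : 0 ≤ D) (hn : 0 ≤ n) (hA : 0 ≤ A) (hL : 0 ≤ L) (hg : ∀ τ, 0 ≤ g τ)
    (hint : ∫⁻ τ in Set.Ioi 0, ENNReal.ofReal
        (deriv μ τ / μ τ * (μ τ / μ b) ^ (p * γ * Real.sign (τ - b)) * g τ ^ p)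
      ≤ ENNReal.ofReal (D * μ b ^ (p * ε) * n ^ p))
    (hle : ∀ τ ∈ Set.Ioo r t, A ≤ L * ((μ τ / μ b) ^ (γ * Real.sign (τ - b)) * g τ)) :
    A ≤ L * (D ^ (1 / p) * μ b ^ ε * n) := by
  have hμb := hμ.pos_s7 hb
  have hB : 0 ≤ D ^ (1 / p) * μ b ^ ε * n := by positivity
  have hBp : (D ^ (1 / p) * μ b ^ ε * n) ^ p = D * μ b ^ (p * ε) * n ^ p := by
    rw [mul_rpow (by positivity) hn, mul_rpow (by positivity) (by positivity),
      ← rpow_mul hD, ← rpow_mul hμb.le, one_div_mul_cancel hp.ne', rpow_one, mul_comm ε]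
  rw [← rpow_le_rpow_iff hA (mul_nonneg hL hB) hp, mul_rpow hL hB, hBp]
  refine hμ.le_mul_of_lintegral_le hdiff hr hrt hgap (by positivity) (by positivity)
    (by positivity) (fun τ hτr => ?_) hint
  have hτ : 0 ≤ τ := hr.trans hτr.1.le
  have hw : 0 ≤ μ τ / μ b := div_nonneg (hμ.pos_s7 hτ).le hμb.le
  have hpow := rpow_le_rpow hA (hle τ hτr) hp.le
  rw [mul_rpow hL (mul_nonneg (rpow_nonneg hw _) (hg τ)), mul_rpow (rpow_nonneg hw _) (hg τ),
    ← rpow_mul hw] at hpow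
  calc A ^ p * (deriv μ τ / μ τ)
      ≤ L ^ p * ((μ τ / μ b) ^ (γ * Real.sign (τ - b) * p) * g τ ^ p) * (deriv μ τ / μ τ) :=
        mul_le_mul_of_nonneg_right hpow (hμ.logDeriv_nonneg hτ (hdiff τ hτ))
    _ = L ^ p * (deriv μ τ / μ τ * (μ τ / μ b) ^ (p * γ * Real.sign (τ - b)) * g τ ^ p) := by
        ring_nf

end IsGrowthRate

lemma le_div_rpow_neg_mul_of_le {a b y c γ α : ℝ} (ha : 0 < a) (hb : 0 < b)
    (h : (a / b) ^ γ * a ^ (-α) * y ≤ c) : y ≤ (a / b) ^ (-(γ - α)) * b ^ α * c := by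
  have hab : 0 < a / b := div_pos ha hb
  have hy : y = (a / b) ^ (-γ) * a ^ α * ((a / b) ^ γ * a ^ (-α) * y) := by
    rw [rpow_neg hab.le, rpow_neg ha.le]
    field_simp
  have hcoef : (a / b) ^ (-γ) * a ^ α = (a / b) ^ (-(γ - α)) * b ^ α := by
    rw [show -(γ - α) = -γ + α by ring, rpow_add hab, mul_assoc, ← mul_rpow hab.le hb.le,
      div_mul_cancel₀ a hb.ne']
  rw [hy, ← hcoef]
  exact mul_le_mul_of_nonneg_left h (by positivity)

lemma mul_rpow_le_of_le_exp_one {C N q m α γ ε : ℝ} (hC : 0 ≤ C) (hCN : C * exp γ ≤ N)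
    (hq : 0 < q) (hqe : q ≤ exp 1) (hm : 1 ≤ m) (hα : 0 ≤ α) (hαγ : α ≤ γ) (hε : 0 ≤ ε) :
    C * m ^ α ≤ N * q ^ (-(γ - α)) * m ^ (α + ε) := by
  have hone : 1 ≤ exp γ * q ^ (-(γ - α)) := by
    rw [rpow_neg hq.le, ← div_eq_mul_inv, one_le_div (rpow_pos_of_pos hq _)]
    calc q ^ (γ - α) ≤ exp 1 ^ (γ - α) := rpow_le_rpow hq.le hqe (sub_nonneg.2 hαγ)
      _ = exp (γ - α) := exp_one_rpow _
      _ ≤ exp γ := exp_le_exp.2 (by linarith)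
  calc C * m ^ α ≤ C * (exp γ * q ^ (-(γ - α))) * m ^ (α + ε) :=
        mul_le_mul (le_mul_of_one_le_right hC hone)
          (rpow_le_rpow_of_exponent_le hm (le_add_of_nonneg_right hε)) (by positivity)
          (by positivity)
    _ = C * exp γ * q ^ (-(γ - α)) * m ^ (α + ε) := by ring
    _ ≤ N * q ^ (-(γ - α)) * m ^ (α + ε) := by gcongr

section GreenFunction

variable {U V : ℝ → ℝ → X →L[ℝ] X} {P : ℝ → X →L[ℝ] X} {μ : ℝ → ℝ} {K M ω α : ℝ}

lemma greenFunction_of_lt {s t : ℝ} (h : s < t) :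
    greenFunction U V P t s = (U t s).comp (P s) := by
  rw [greenFunction, if_pos h]

lemma greenFunction_of_gt {s t : ℝ} (h : t < s) :
    greenFunction U V P t s = -((V t s).comp (1 - P s)) := by
  rw [greenFunction, if_neg h.not_gt, if_pos h]

lemma greenFunction_apply_greenFunction_of_lt (hU : IsEvolutionOperator U)
    (hP : IsProjectionValued P) (hC : CompatibleProjection U V P) {s τ t : ℝ} (hs : 0 ≤ s)
    (hsτ : s < τ) (hτt : τ < t) (x : X) :
    greenFunction U V P t τ (greenFunction U V P τ s x) = greenFunction U V P t s x := by
  have hPP := DFunLike.congr_fun (hP.1 s hs) x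
  have hPU := DFunLike.congr_fun (hC.1 s τ hs hsτ.le) (P s x)
  have hUU := DFunLike.congr_fun (hU.2.1 s τ t hs hsτ.le hτt.le) (P s x)
  simp only [ContinuousLinearMap.comp_apply] at hPP hPU hUU
  simp only [greenFunction_of_lt hsτ, greenFunction_of_lt hτt,
    greenFunction_of_lt (hsτ.trans hτt), ContinuousLinearMap.comp_apply, hPU, hPP, hUU]

-- `U_Q` inherits the cocycle property because `U(s,t)` is injective on `Q(t)X`.
lemma greenFunction_apply_greenFunction_of_gt (hU : IsEvolutionOperator U)
    (hC : CompatibleProjection U V P) {s τ t : ℝ} (ht : 0 ≤ t) (htτ : t < τ) (hτs : τ < s)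
    (x : X) :
    greenFunction U V P t τ (greenFunction U V P τ s x) = -greenFunction U V P t s x := by
  obtain ⟨-, hVQ, hUV, hVU⟩ := hC
  have hτ : 0 ≤ τ := ht.trans htτ.le
  set y := V t τ ((1 - P τ) (V τ s ((1 - P s) x)))
  have hQy : (1 - P t) y = y := hVQ t τ ht htτ.le _
  have hUy : U s t y = (1 - P s) x := by
    rw [← hU.2.1 t τ s ht htτ.le hτs.le, ContinuousLinearMap.comp_apply, hUV t τ ht htτ.le,
      hVQ τ s hτ hτs.le, hUV τ s hτ hτs.le]
  have hy : V t s ((1 - P s) x) = y := by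
    rw [← hUy, ← hQy, hVU t s ht (htτ.trans hτs).le, hQy]
  simp only [greenFunction_of_gt htτ, greenFunction_of_gt hτs,
    greenFunction_of_gt (htτ.trans hτs), neg_apply, ContinuousLinearMap.comp_apply, map_neg,
    neg_neg, hy, y]

lemma norm_greenFunction_le_of_near
    (hG : ∀ t s, 0 ≤ t → 0 ≤ s → t ≠ s →
      ‖greenFunction U V P t s‖ ≤
        M * (deriv μ s / μ s) * (μ t / μ s) ^ (ω * Real.sign (t - s)) * μ s ^ α)
    (hM : 0 ≤ M) (hK : 0 ≤ K) (hω : 0 ≤ ω) {s t : ℝ} (hs : 0 ≤ s) (ht : 0 ≤ t)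
    (hts : t ≠ s) (hμs : 0 < μ s) (hμt : 0 < μ t) (hρ : deriv μ s / μ s ≤ K)
    (h₁ : μ t ≤ exp 1 * μ s) (h₂ : μ s ≤ exp 1 * μ t) :
    ‖greenFunction U V P t s‖ ≤ M * K * exp ω * μ s ^ α := by
  have hq : 0 ≤ μ t / μ s := by positivity
  have hsign : (μ t / μ s) ^ Real.sign (t - s) ≤ exp 1 := by
    rcases Real.sign_apply_eq_of_ne_zero _ (sub_ne_zero.2 hts) with h | h <;> rw [h]
    · rwa [rpow_neg_one, inv_div, div_le_iff₀ hμt]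
    · rwa [rpow_one, div_le_iff₀ hμs]
  have hweight : (μ t / μ s) ^ (ω * Real.sign (t - s)) ≤ exp ω := by
    rw [mul_comm, rpow_mul hq, ← exp_one_rpow]
    exact rpow_le_rpow (by positivity) hsign hω
  refine (hG t s ht hs hts).trans ?_
  gcongr

-- Let `t ↓ s` in the near-diagonal bound for `G(t,s) = U(t,s)P(s)`.
lemma norm_projection_apply_le (hU : IsEvolutionOperator U) (hμ : IsGrowthRate μ)
    (hG : ∀ t s, 0 ≤ t → 0 ≤ s → t ≠ s →
      ‖greenFunction U V P t s‖ ≤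
        M * (deriv μ s / μ s) * (μ t / μ s) ^ (ω * Real.sign (t - s)) * μ s ^ α)
    (hM : 0 ≤ M) (hK : 0 ≤ K) (hω : 0 ≤ ω) {s : ℝ} (hs : 0 ≤ s) (hcont : ContinuousAt μ s)
    (hρ : deriv μ s / μ s ≤ K) (x : X) :
    ‖P s x‖ ≤ M * K * exp ω * μ s ^ α * ‖x‖ := by
  have hμs := hμ.pos_s7 hs
  have hlim : Tendsto (fun t => U t s (P s x)) (𝓝[>] s) (𝓝 (P s x)) := by
    have hpair : ContinuousWithinAt (fun t : ℝ => ((t, s) : ℝ × ℝ)) (Set.Ioi s) s :=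
      (continuous_id.prodMk continuous_const).continuousWithinAt
    have hUc := ContinuousWithinAt.comp (f := fun t : ℝ => (t, s)) (x := s)
      (hU.2.2 (P s x) (s, s) ⟨hs, le_rfl⟩) hpair fun t (ht : s < t) => ⟨hs, ht.le⟩
    simpa [ContinuousWithinAt, Function.comp_def, hU.1 s hs] using hUc
  have hnear : ∀ᶠ t in 𝓝[>] s, μ t < exp 1 * μ s :=
    nhdsWithin_le_nhds (hcont.eventually (gt_mem_nhds
      (lt_mul_of_one_lt_left hμs (one_lt_exp_iff.2 one_pos))))
  refine le_of_tendsto hlim.norm ?_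
  filter_upwards [hnear, self_mem_nhdsWithin] with t hμt (hst : s < t)
  rw [← ContinuousLinearMap.comp_apply, ← greenFunction_of_lt (V := V) hst]
  refine (ContinuousLinearMap.le_opNorm _ x).trans
    (mul_le_mul_of_nonneg_right ?_ (norm_nonneg x))
  have ht : 0 ≤ t := hs.trans hst.le
  exact norm_greenFunction_le_of_near hG hM hK hω hs ht hst.ne' hμs (hμ.pos_s7 ht) hρ hμt.le
    ((hμ.le_of_le hs hst.le).trans
      (le_mul_of_one_le_left (hμ.pos_s7 ht).le (one_le_exp zero_le_one)))

lemma norm_greenFunction_apply_le_of_lt_of_lt (hU : IsEvolutionOperator U)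
    (hP : IsProjectionValued P) (hC : CompatibleProjection U V P) (hμ : IsGrowthRate μ)
    (hG : ∀ t s, 0 ≤ t → 0 ≤ s → t ≠ s →
      ‖greenFunction U V P t s‖ ≤
        M * (deriv μ s / μ s) * (μ t / μ s) ^ (ω * Real.sign (t - s)) * μ s ^ α)
    (hM : 0 ≤ M) (hK : 0 ≤ K) (hω : 0 ≤ ω) (hα : 0 ≤ α) {s τ t : ℝ} (hs : 0 ≤ s)
    (hsτ : s < τ) (hτt : τ < t) (hρ : deriv μ τ / μ τ ≤ K) (hnear : μ t ≤ exp 1 * μ τ)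
    (x : X) :
    ‖greenFunction U V P t s x‖ ≤ M * K * exp ω * μ t ^ α * ‖greenFunction U V P τ s x‖ := by
  have hτ : 0 ≤ τ := hs.trans hsτ.le
  have hμτt : μ τ ≤ μ t := hμ.le_of_le hτ hτt.le
  rw [← greenFunction_apply_greenFunction_of_lt hU hP hC hs hsτ hτt x]
  refine (ContinuousLinearMap.le_opNorm _ _).trans
    (mul_le_mul_of_nonneg_right ?_ (norm_nonneg _))
  refine (norm_greenFunction_le_of_near hG hM hK hω hτ (hτ.trans hτt.le) hτt.ne' (hμ.pos_s7 hτ)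
    (hμ.pos_s7 (hτ.trans hτt.le)) hρ hnear
    (hμτt.trans (le_mul_of_one_le_left (hμ.pos_s7 (hτ.trans hτt.le)).le
      (one_le_exp zero_le_one)))).trans ?_
  exact mul_le_mul_of_nonneg_left (rpow_le_rpow (hμ.pos_s7 hτ).le hμτt hα) (by positivity)

lemma norm_greenFunction_apply_le_of_gt_of_gt (hU : IsEvolutionOperator U)
    (hC : CompatibleProjection U V P) (hμ : IsGrowthRate μ)
    (hG : ∀ t s, 0 ≤ t → 0 ≤ s → t ≠ s →
      ‖greenFunction U V P t s‖ ≤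
        M * (deriv μ s / μ s) * (μ t / μ s) ^ (ω * Real.sign (t - s)) * μ s ^ α)
    (hM : 0 ≤ M) (hK : 0 ≤ K) (hω : 0 ≤ ω) (hα : 0 ≤ α) {s τ t : ℝ} (ht : 0 ≤ t)
    (htτ : t < τ) (hτs : τ < s) (hρ : deriv μ τ / μ τ ≤ K) (hnear : μ τ ≤ exp 1 * μ t)
    (x : X) :
    ‖greenFunction U V P t s x‖ ≤ M * K * exp ω * μ s ^ α * ‖greenFunction U V P τ s x‖ := by
  have hτ : 0 ≤ τ := ht.trans htτ.le
  have hμtτ : μ t ≤ μ τ := hμ.le_of_le ht htτ.le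
  rw [← norm_neg, ← greenFunction_apply_greenFunction_of_gt hU hC ht htτ hτs x]
  refine (ContinuousLinearMap.le_opNorm _ _).trans
    (mul_le_mul_of_nonneg_right ?_ (norm_nonneg _))
  refine (norm_greenFunction_le_of_near hG hM hK hω hτ ht htτ.ne (hμ.pos_s7 hτ) (hμ.pos_s7 ht) hρ
    (hμtτ.trans (le_mul_of_one_le_left (hμ.pos_s7 hτ).le (one_le_exp zero_le_one)))
    hnear).trans ?_
  exact mul_le_mul_of_nonneg_left (rpow_le_rpow (hμ.pos_s7 hτ).le (hμ.le_of_le hτ hτs.le) hα)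
    (by positivity)

end GreenFunction

section Dichotomy

variable {U V : ℝ → ℝ → X →L[ℝ] X} {P : ℝ → X →L[ℝ] X} {μ : ℝ → ℝ}
  {K M ω α γ ε p D : ℝ}
  (hμ : IsGrowthRate μ) (hdiff : ∀ t, 0 ≤ t → DifferentiableAt ℝ μ t)
  (hK : ∀ t, 0 ≤ t → deriv μ t / μ t ≤ K)
  (hU : IsEvolutionOperator U) (hP : IsProjectionValued P) (hC : CompatibleProjection U V P)
  (hG : ∀ t s, 0 ≤ t → 0 ≤ s → t ≠ s →
    ‖greenFunction U V P t s‖ ≤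
      M * (deriv μ s / μ s) * (μ t / μ s) ^ (ω * Real.sign (t - s)) * μ s ^ α)
  (hM : 0 ≤ M) (hω : 0 ≤ ω) (hα : 0 ≤ α) (hαγ : α ≤ γ) (hε : 0 ≤ ε) (hp : 0 < p)
  (hD : 0 ≤ D)
  (hint : ∀ t, 0 ≤ t → ∀ x : X,
    ∫⁻ τ in Set.Ioi (0 : ℝ), ENNReal.ofReal
        (deriv μ τ / μ τ * (μ τ / μ t) ^ (p * γ * Real.sign (τ - t)) *
          ‖greenFunction U V P τ t x‖ ^ p)
      ≤ ENNReal.ofReal (D * μ t ^ (p * ε) * ‖x‖ ^ p))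

include hμ hdiff hK hU hP hC hG hM hω hα hαγ hp hD hint in
lemma norm_stable_apply_le_of_gap {s t : ℝ} (hs : 0 ≤ s) (hst : s ≤ t)
    (hgap : exp 1 * μ s ≤ μ t) (x : X) :
    ‖U t s (P s x)‖ ≤ M * K * exp ω * exp γ * D ^ (1 / p) * (μ t / μ s) ^ (-(γ - α)) *
      μ s ^ (α + ε) * ‖x‖ := by
  have hK0 := hμ.nonneg_of_logDeriv_le hdiff hK
  have hμs := hμ.pos_s7 hs
  have hμt := hμ.pos_s7 (hs.trans hst)
  obtain ⟨r, ⟨hsr, hrt⟩, hμr⟩ := intermediate_value_Icc hst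
    (fun τ hτ => (hdiff τ (hs.trans hτ.1)).continuousAt.continuousWithinAt)
    (⟨(le_div_iff₀ (exp_pos 1)).2 (by linarith),
      div_le_self hμt.le (one_le_exp zero_le_one)⟩ : μ t / exp 1 ∈ Set.Icc (μ s) (μ t))
  have hr : 0 ≤ r := hs.trans hsr
  have hwindow : μ t = exp 1 * μ r := by rw [hμr]; field_simp
  have hA : (μ t / μ s) ^ γ * μ t ^ (-α) * ‖U t s (P s x)‖ ≤
      M * K * exp ω * exp γ * (D ^ (1 / p) * μ s ^ ε * ‖x‖) := by
    refine hμ.le_of_forall_le_weighted hdiff hr hrt hwindow hs hp hD (norm_nonneg x)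
      (by positivity) (by positivity) (fun τ => norm_nonneg _) (hint s hs x) fun τ hτ => ?_
    have hsτ : s < τ := hsr.trans_lt hτ.1
    have hτ0 : 0 ≤ τ := hs.trans hsτ.le
    have hμτ := hμ.pos_s7 hτ0
    have hnear : μ t ≤ exp 1 * μ τ :=
      hwindow.le.trans (mul_le_mul_of_nonneg_left (hμ.le_of_le hr hτ.1.le) (exp_pos 1).le)
    have hpt := norm_greenFunction_apply_le_of_lt_of_lt hU hP hC hμ hG hM hK0 hω hα hs hsτ
      hτ.2 (hK τ hτ0) hnear x
    rw [greenFunction_of_lt (hsτ.trans hτ.2), ContinuousLinearMap.comp_apply] at hpt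
    have hweight : (μ t / μ s) ^ γ ≤ exp γ * (μ τ / μ s) ^ γ := by
      rw [← exp_one_rpow, ← mul_rpow (exp_pos 1).le (by positivity), mul_div_assoc']
      exact rpow_le_rpow (by positivity) (div_le_div_of_nonneg_right hnear hμs.le)
        (hα.trans hαγ)
    rw [Real.sign_of_pos (sub_pos.2 hsτ), mul_one]
    calc (μ t / μ s) ^ γ * μ t ^ (-α) * ‖U t s (P s x)‖
        ≤ exp γ * (μ τ / μ s) ^ γ * μ t ^ (-α) *
            (M * K * exp ω * μ t ^ α * ‖greenFunction U V P τ s x‖) := by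
          gcongr
      _ = M * K * exp ω * exp γ * ((μ τ / μ s) ^ γ * ‖greenFunction U V P τ s x‖) *
            (μ t ^ (-α) * μ t ^ α) := by ring
      _ = M * K * exp ω * exp γ * ((μ τ / μ s) ^ γ * ‖greenFunction U V P τ s x‖) := by
          rw [← rpow_add hμt, neg_add_cancel, rpow_zero, mul_one]
  calc ‖U t s (P s x)‖
      ≤ (μ t / μ s) ^ (-(γ - α)) * μ s ^ α *
          (M * K * exp ω * exp γ * (D ^ (1 / p) * μ s ^ ε * ‖x‖)) :=
        le_div_rpow_neg_mul_of_le hμt hμs hA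
    _ = M * K * exp ω * exp γ * D ^ (1 / p) * (μ t / μ s) ^ (-(γ - α)) *
          μ s ^ (α + ε) * ‖x‖ := by rw [rpow_add hμs]; ring

include hμ hdiff hK hU hC hG hM hω hα hαγ hp hD hint in
lemma norm_unstable_apply_le_of_gap {s t : ℝ} (hs : 0 ≤ s) (hst : s ≤ t)
    (hgap : exp 1 * μ s ≤ μ t) (x : X) :
    ‖V s t ((1 - P t) x)‖ ≤ M * K * exp ω * exp γ * D ^ (1 / p) * (μ t / μ s) ^ (-(γ - α)) *
      μ t ^ (α + ε) * ‖x‖ := by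
  have hK0 := hμ.nonneg_of_logDeriv_le hdiff hK
  have hμs := hμ.pos_s7 hs
  have ht : 0 ≤ t := hs.trans hst
  have hμt := hμ.pos_s7 ht
  obtain ⟨r, ⟨hsr, hrt⟩, hμr⟩ := intermediate_value_Icc hst
    (fun τ hτ => (hdiff τ (hs.trans hτ.1)).continuousAt.continuousWithinAt)
    (⟨le_mul_of_one_le_left hμs.le (one_le_exp zero_le_one), hgap⟩ :
      exp 1 * μ s ∈ Set.Icc (μ s) (μ t))
  have hA : (μ t / μ s) ^ γ * μ t ^ (-α) * ‖V s t ((1 - P t) x)‖ ≤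
      M * K * exp ω * exp γ * (D ^ (1 / p) * μ t ^ ε * ‖x‖) := by
    refine hμ.le_of_forall_le_weighted hdiff hs hsr hμr ht hp hD (norm_nonneg x)
      (by positivity) (by positivity) (fun τ => norm_nonneg _) (hint t ht x) fun τ hτ => ?_
    have hτ0 : 0 ≤ τ := hs.trans hτ.1.le
    have hτt : τ < t := hτ.2.trans_le hrt
    have hμτ := hμ.pos_s7 hτ0
    have hnear : μ τ ≤ exp 1 * μ s := hμr ▸ hμ.le_of_le hτ0 hτ.2.le
    have hpt := norm_greenFunction_apply_le_of_gt_of_gt hU hC hμ hG hM hK0 hω hα hs hτ.1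
      hτt (hK τ hτ0) hnear x
    rw [greenFunction_of_gt (hτ.1.trans hτt), neg_apply, norm_neg,
      ContinuousLinearMap.comp_apply] at hpt
    have hweight : (μ t / μ s) ^ γ ≤ exp γ * (μ t / μ τ) ^ γ := by
      rw [← exp_one_rpow, ← mul_rpow (exp_pos 1).le (by positivity), mul_div_assoc']
      refine rpow_le_rpow (by positivity) ?_ (hα.trans hαγ)
      rw [div_le_div_iff₀ hμs hμτ]
      nlinarith [mul_le_mul_of_nonneg_left hnear hμt.le]
    rw [Real.sign_of_neg (sub_neg.2 hτt), mul_neg_one, rpow_neg (div_pos hμτ hμt).le,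
      ← inv_rpow (div_pos hμτ hμt).le, inv_div]
    calc (μ t / μ s) ^ γ * μ t ^ (-α) * ‖V s t ((1 - P t) x)‖
        ≤ exp γ * (μ t / μ τ) ^ γ * μ t ^ (-α) *
            (M * K * exp ω * μ t ^ α * ‖greenFunction U V P τ t x‖) := by
          gcongr
      _ = M * K * exp ω * exp γ * ((μ t / μ τ) ^ γ * ‖greenFunction U V P τ t x‖) *
            (μ t ^ (-α) * μ t ^ α) := by ring
      _ = M * K * exp ω * exp γ * ((μ t / μ τ) ^ γ * ‖greenFunction U V P τ t x‖) := by
          rw [← rpow_add hμt, neg_add_cancel, rpow_zero, mul_one]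
  calc ‖V s t ((1 - P t) x)‖
      ≤ (μ t / μ s) ^ (-(γ - α)) * μ s ^ α *
          (M * K * exp ω * exp γ * (D ^ (1 / p) * μ t ^ ε * ‖x‖)) :=
        le_div_rpow_neg_mul_of_le hμt hμs hA
    _ = M * K * exp ω * exp γ * D ^ (1 / p) * (μ t / μ s) ^ (-(γ - α)) * μ t ^ ε *
          ‖x‖ * μ s ^ α := by ring
    _ ≤ M * K * exp ω * exp γ * D ^ (1 / p) * (μ t / μ s) ^ (-(γ - α)) * μ t ^ ε *
          ‖x‖ * μ t ^ α :=
        mul_le_mul_of_nonneg_left (rpow_le_rpow hμs.le (hμ.le_of_le hs hst) hα) (by positivity)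
    _ = M * K * exp ω * exp γ * D ^ (1 / p) * (μ t / μ s) ^ (-(γ - α)) *
          μ t ^ (α + ε) * ‖x‖ := by rw [rpow_add hμt]; ring

include hμ hdiff hK hU hP hC hG hM hω hα hαγ hε hp hD hint in
lemma norm_stable_le {s t : ℝ} (hs : 0 ≤ s) (hst : s ≤ t) :
    ‖(U t s).comp (P s)‖ ≤ (1 + M * K * exp ω * exp γ * (1 + D ^ (1 / p))) *
      (μ t / μ s) ^ (-(γ - α)) * μ s ^ (α + ε) := by
  have hK0 := hμ.nonneg_of_logDeriv_le hdiff hK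
  have hμs := hμ.pos_s7 hs
  have hμt := hμ.pos_s7 (hs.trans hst)
  have hL : 0 ≤ M * K * exp ω * exp γ := by positivity
  have hDp := rpow_nonneg hD (1 / p)
  have hCN : M * K * exp ω * exp γ ≤ 1 + M * K * exp ω * exp γ * (1 + D ^ (1 / p)) := by
    nlinarith
  refine ContinuousLinearMap.opNorm_le_bound _ (by positivity) fun x => ?_
  rw [ContinuousLinearMap.comp_apply]
  have hnear : μ t ≤ exp 1 * μ s → M * K * exp ω * μ s ^ α * ‖x‖ ≤
      (1 + M * K * exp ω * exp γ * (1 + D ^ (1 / p))) * (μ t / μ s) ^ (-(γ - α)) *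
        μ s ^ (α + ε) * ‖x‖ := fun hle =>
    mul_le_mul_of_nonneg_right (mul_rpow_le_of_le_exp_one (by positivity) hCN (by positivity)
      ((div_le_iff₀ hμs).2 hle) (hμ.1 s hs) hα hαγ hε) (norm_nonneg x)
  rcases hst.eq_or_lt with rfl | hlt
  · rw [hU.1 s hs, one_apply_eq_self]
    exact (norm_projection_apply_le hU hμ hG hM hK0 hω hs (hdiff s hs).continuousAt
      (hK s hs) x).trans (hnear (le_mul_of_one_le_left hμs.le (one_le_exp zero_le_one)))
  rcases le_or_gt (μ t) (exp 1 * μ s) with hsmall | hbig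
  · refine le_trans ?_ (hnear hsmall)
    rw [← ContinuousLinearMap.comp_apply, ← greenFunction_of_lt (V := V) hlt]
    refine (ContinuousLinearMap.le_opNorm _ x).trans
      (mul_le_mul_of_nonneg_right ?_ (norm_nonneg x))
    exact norm_greenFunction_le_of_near hG hM hK0 hω hs (hs.trans hst) hlt.ne' hμs hμt
      (hK s hs) hsmall
      ((hμ.le_of_le hs hst).trans (le_mul_of_one_le_left hμt.le (one_le_exp zero_le_one)))
  · refine (norm_stable_apply_le_of_gap hμ hdiff hK hU hP hC hG hM hω hα hαγ hp hD hint hs hst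
      hbig.le x).trans ?_
    gcongr ?_ * _ * _ * _
    nlinarith

include hμ hdiff hK hU hC hG hM hω hα hαγ hε hp hD hint in
lemma norm_unstable_le {s t : ℝ} (hs : 0 ≤ s) (hst : s ≤ t) :
    ‖(V s t).comp (1 - P t)‖ ≤ (1 + M * K * exp ω * exp γ * (1 + D ^ (1 / p))) *
      (μ t / μ s) ^ (-(γ - α)) * μ t ^ (α + ε) := by
  have hK0 := hμ.nonneg_of_logDeriv_le hdiff hK
  have hμs := hμ.pos_s7 hs
  have ht : 0 ≤ t := hs.trans hst
  have hμt := hμ.pos_s7 ht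
  have hL : 0 ≤ M * K * exp ω * exp γ := by positivity
  have hDp := rpow_nonneg hD (1 / p)
  have hCN : M * K * exp ω * exp γ ≤ 1 + M * K * exp ω * exp γ * (1 + D ^ (1 / p)) := by
    nlinarith
  refine ContinuousLinearMap.opNorm_le_bound _ (by positivity) fun x => ?_
  rw [ContinuousLinearMap.comp_apply]
  have hnear : μ t ≤ exp 1 * μ s → M * K * exp ω * μ t ^ α * ‖x‖ ≤
      M * K * exp ω * exp γ * (μ t / μ s) ^ (-(γ - α)) * μ t ^ (α + ε) * ‖x‖ := fun hle =>
    mul_le_mul_of_nonneg_right (mul_rpow_le_of_le_exp_one (by positivity) le_rfl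
      (by positivity) ((div_le_iff₀ hμs).2 hle) (hμ.1 t ht) hα hαγ hε) (norm_nonneg x)
  rcases hst.eq_or_lt with rfl | hlt
  · have hV : V s s ((1 - P s) x) = (1 - P s) x := by
      simpa [hU.1 s hs] using hC.2.2.1 s s hs le_rfl x
    have h1 : 1 ≤ μ s ^ (α + ε) := one_le_rpow (hμ.1 s hs) (by linarith)
    have hPx := (norm_projection_apply_le hU hμ hG hM hK0 hω hs (hdiff s hs).continuousAt
      (hK s hs) x).trans (hnear (le_mul_of_one_le_left hμs.le (one_le_exp zero_le_one)))
    rw [div_self hμs.ne', one_rpow, mul_one] at hPx ⊢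
    rw [hV]
    calc ‖(1 - P s) x‖ ≤ ‖x‖ + ‖P s x‖ := by
          rw [sub_apply, one_apply_eq_self]
          exact norm_sub_le _ _
      _ ≤ μ s ^ (α + ε) * ‖x‖ + M * K * exp ω * exp γ * μ s ^ (α + ε) * ‖x‖ :=
          add_le_add (le_mul_of_one_le_left (norm_nonneg x) h1) hPx
      _ = (1 + M * K * exp ω * exp γ) * μ s ^ (α + ε) * ‖x‖ := by ring
      _ ≤ (1 + M * K * exp ω * exp γ * (1 + D ^ (1 / p))) * μ s ^ (α + ε) * ‖x‖ := by
          gcongr ?_ * _ * _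
          nlinarith
  rcases le_or_gt (μ t) (exp 1 * μ s) with hsmall | hbig
  · refine le_trans ?_ ((hnear hsmall).trans (by gcongr))
    rw [← norm_neg, ← ContinuousLinearMap.comp_apply, ← neg_apply,
      ← greenFunction_of_gt (U := U) hlt]
    refine (ContinuousLinearMap.le_opNorm _ x).trans
      (mul_le_mul_of_nonneg_right ?_ (norm_nonneg x))
    exact norm_greenFunction_le_of_near hG hM hK0 hω ht hs hlt.ne hμt hμs (hK t ht)
      ((hμ.le_of_le hs hst).trans (le_mul_of_one_le_left hμt.le (one_le_exp zero_le_one)))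
      hsmall
  · refine (norm_unstable_apply_le_of_gap hμ hdiff hK hU hC hG hM hω hα hαγ hp hD hint hs hst
      hbig.le x).trans ?_
    gcongr ?_ * _ * _ * _
    nlinarith

end Dichotomy

theorem integral_estimate_implies_dichotomy_general
    {X : Type*} [NormedAddCommGroup X] [NormedSpace ℝ X]
    (μ : ℝ → ℝ) (Kμ : ℝ) (hgr : IsGrowthRate μ)
    (hdiff : ∀ t, 0 ≤ t → DifferentiableAt ℝ μ t)
    (hKμ : ∀ t, 0 ≤ t → deriv μ t / μ t ≤ Kμ)
    (U V : ℝ → ℝ → X →L[ℝ] X) (P : ℝ → X →L[ℝ] X)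
    (hU : IsEvolutionOperator U) (hP : IsProjectionValued P)
    (hC : CompatibleProjection U V P)
    (M ω α : ℝ) (hω : 0 < ω) (hα : 0 ≤ α) (hM : 1 ≤ M)
    (hG : ∀ t s, 0 ≤ t → 0 ≤ s → t ≠ s →
      ‖greenFunction U V P t s‖ ≤
        M * (deriv μ s / μ s) * (μ t / μ s) ^ (ω * Real.sign (t - s)) * μ s ^ α)
    (p γ ε D : ℝ) (hp : 1 ≤ p) (hγ : α < γ) (hε : 0 ≤ ε) (hD : 0 < D)
    (hint : ∀ t, 0 ≤ t → ∀ x : X,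
      ∫⁻ τ in Set.Ioi (0 : ℝ), ENNReal.ofReal
          (deriv μ τ / μ τ * (μ τ / μ t) ^ (p * γ * Real.sign (τ - t)) *
            ‖greenFunction U V P τ t x‖ ^ p)
        ≤ ENNReal.ofReal (D * μ t ^ (p * ε) * ‖x‖ ^ p)) :
    NonuniformMuDichotomy μ U V P := by
  have hM0 : 0 ≤ M := zero_le_one.trans hM
  have hK0 := hgr.nonneg_of_logDeriv_le hdiff hKμ
  have hN : 1 ≤ 1 + M * Kμ * exp ω * exp γ * (1 + D ^ (1 / p)) :=
    le_add_of_nonneg_right (by positivity)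
  refine ⟨γ - α, γ - α, α + ε, _, _, sub_pos.2 hγ, sub_pos.2 hγ, add_nonneg hα hε, hN, hN,
    fun s t hs hst => ⟨?_, ?_⟩⟩
  · exact norm_stable_le hgr hdiff hKμ hU hP hC hG hM0 hω.le hα hγ.le hε (by linarith) hD.le
      hint hs hst
  · exact norm_unstable_le hgr hdiff hKμ hU hC hG hM0 hω.le hα hγ.le hε (by linarith) hD.le
      hint hs hst

/-- Theorem 3.2 (Datko-type theorem): let `μ` be a differentiable growth rate with
`sup_{t ≥ 0} μ'(t)/μ(t) ≤ K_μ < ∞`, and suppose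
`‖G(t,s)‖ ≤ M (μ'(s)/μ(s)) (μ(t)/μ(s))^{ω sign(t-s)} μ(s)^α` for `t ≠ s`. If
`∫₀^∞ (μ'(τ)/μ(τ)) (μ(τ)/μ(t))^{pγ sign(τ-t)} ‖G(τ,t)x‖^p dτ ≤ D μ(t)^{pε} ‖x‖^p`
holds for some `p ≥ 1`, `γ > α`, `ε ≥ 0`, `D > 0`, then `U` has a nonuniform
μ-dichotomy with projection valued function `P`. -/
theorem integral_estimate_implies_dichotomy
    {X : Type*} [NormedAddCommGroup X] [NormedSpace ℝ X] [CompleteSpace X]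
    (μ : ℝ → ℝ) (Kμ : ℝ) (hgr : IsGrowthRate μ)
    (hdiff : ∀ t, 0 ≤ t → DifferentiableAt ℝ μ t)
    (hKμ : ∀ t, 0 ≤ t → deriv μ t / μ t ≤ Kμ)
    (U V : ℝ → ℝ → X →L[ℝ] X) (P : ℝ → X →L[ℝ] X)
    (hU : IsEvolutionOperator U) (hP : IsProjectionValued P)
    (hC : CompatibleProjection U V P)
    (M ω α : ℝ) (hω : 0 < ω) (hα : 0 ≤ α) (hM : 1 ≤ M)
    (hG : ∀ t s, 0 ≤ t → 0 ≤ s → t ≠ s →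
      ‖greenFunction U V P t s‖ ≤
        M * (deriv μ s / μ s) * (μ t / μ s) ^ (ω * Real.sign (t - s)) * μ s ^ α)
    (p γ ε D : ℝ) (hp : 1 ≤ p) (hγ : α < γ) (hε : 0 ≤ ε) (hD : 0 < D)
    (hint : ∀ t, 0 ≤ t → ∀ x : X,
      ∫⁻ τ in Set.Ioi (0 : ℝ), ENNReal.ofReal
          (deriv μ τ / μ τ * (μ τ / μ t) ^ (p * γ * Real.sign (τ - t)) *
            ‖greenFunction U V P τ t x‖ ^ p)
        ≤ ENNReal.ofReal (D * μ t ^ (p * ε) * ‖x‖ ^ p)) :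
    NonuniformMuDichotomy μ U V P :=
  integral_estimate_implies_dichotomy_general μ Kμ hgr hdiff hKμ U V P hU hP hC M ω α hω hα hM hG p
    γ ε D hp hγ hε hD hint
end
end

section
/- Let μ : [0,∞) → [1,∞) be a differentiable growth rate with K_μ := sup_{t ≥ 0} μ'(t)/μ(t) < +∞, and let U : Δ → B(X) be an evolution operator with compatible projection valued function P satisfying ‖U(t,s)P(s)‖ ≤ M (μ'(s)/μ(s)) (μ(t)/μ(s))^{ω} μ(s)^α for all t > s ≥ 0, for some ω > 0, α ≥ 0, M ≥ 1. Assume that for some p ≥ 1, γ > α, ε ≥ 0 and D > 0 one has ∫_s^{+∞} (μ'(τ)/μ(τ)) (μ(τ)/μ(s))^{pγ} ‖U(τ,s)P(s)x‖^p dτ ≤ D μ(s)^{pε} ‖x‖^p for all s ≥ 0 and x ∈ X. Then for all t ≥ s+1, s ≥ 0 and x ∈ X: ‖U(t,s)P(s)x‖^p ≤ D M^p K_μ^{p−1} e^{K_μ(ω+γ)p} (μ(t)/μ(s))^{−p(γ−α)} μ(s)^{p(ε+α)} ‖x‖^p. -/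
open Real MeasureTheory Filter

noncomputable section

variable {X : Type*} [NormedAddCommGroup X] [NormedSpace ℝ X]

/-! For `τ ∈ (t - 1, t)` the cocycle property and the compatibility of `P` factor
`U(t,s)P(s) = U(t,τ)P(τ) ∘ U(τ,s)P(s)`, and the growth bound controls `U(t,τ)P(τ)`. Since
`μ'/μ ≤ K_μ`, the ratio `μ(t)/μ(τ)` is at most `e^{K_μ}`, which makes `‖U(t,s)P(s)x‖^p` at most a
constant times the integrand of the integral hypothesis at `τ`. Integrating over the unit interval
`(t - 1, t) ⊆ (s, ∞)` gives the estimate. -/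

open Set

lemma deriv_div_nonneg_of_monotoneOn {μ : ℝ → ℝ} {a τ : ℝ} (hm : MonotoneOn μ (Ici a))
    (hτ : a ≤ τ) (hd : DifferentiableAt ℝ μ τ) (hμ : 0 < μ τ) : 0 ≤ deriv μ τ / μ τ := by
  refine div_nonneg ?_ hμ.le
  rw [← hd.derivWithin (uniqueDiffOn_Ici a τ hτ)]
  exact hm.derivWithin_nonneg

lemma div_le_exp_of_deriv_div_le {μ : ℝ → ℝ} {K a : ℝ} (hpos : ∀ t ∈ Ici a, 0 < μ t)
    (hdiff : ∀ t ∈ Ici a, DifferentiableAt ℝ μ t) (hK : ∀ t ∈ Ici a, deriv μ t / μ t ≤ K)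
    {b c : ℝ} (hb : a ≤ b) (hbc : b ≤ c) : μ c / μ b ≤ exp (K * (c - b)) := by
  have hlog : log (μ c) - log (μ b) ≤ K * (c - b) := by
    refine (convex_Ici a).image_sub_le_mul_sub_of_deriv_le (f := fun t => log (μ t)) ?_ ?_ ?_
      b hb c (hb.trans hbc) hbc
    · exact fun t ht => ((hdiff t ht).log (hpos t ht).ne').continuousAt.continuousWithinAt
    · exact fun t ht => ((hdiff t (interior_subset ht)).log
        (hpos t (interior_subset ht)).ne').differentiableWithinAt
    · intro t ht
      rw [deriv.log (hdiff t (interior_subset ht)) (hpos t (interior_subset ht)).ne']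
      exact hK t (interior_subset ht)
  have hb0 := hpos b hb
  have hc0 := hpos c (hb.trans hbc)
  rwa [← exp_log (div_pos hc0 hb0), exp_le_exp, log_div hc0.ne' hb0.ne']

lemma rpow_le_rpow_sub_one_mul {d K p : ℝ} (hd : 0 ≤ d) (hdK : d ≤ K) (hp : 1 ≤ p) :
    d ^ p ≤ K ^ (p - 1) * d := by
  calc d ^ p = d ^ (p - 1) * d := by
        rw [← rpow_add_one' hd (by linarith), sub_add_cancel]
    _ ≤ K ^ (p - 1) * d := by gcongr

lemma weight_rpow_le {a b c d K M ω α γ p : ℝ} (ha : 0 < a) (hb : 0 < b) (hc : 0 < c)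
    (hcb : c / b ≤ exp K) (hd : 0 ≤ d) (hdK : d ≤ K) (hM : 0 ≤ M) (hω : 0 ≤ ω) (hα : 0 ≤ α)
    (hγ : α ≤ γ) (hp : 1 ≤ p) :
    (M * d * (c / b) ^ ω * b ^ α) ^ p ≤
      M ^ p * K ^ (p - 1) * exp (K * (ω + γ) * p) * (c / a) ^ (-(p * (γ - α))) *
        a ^ (α * p) * (d * (b / a) ^ (p * γ)) := by
  have hK : 0 ≤ K := hd.trans hdK
  have hratio : (c / b) ^ (p * (ω + γ - α)) ≤ exp (K * (ω + γ) * p) :=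
    calc (c / b) ^ (p * (ω + γ - α)) ≤ exp K ^ (p * (ω + γ - α)) := by
          gcongr
          nlinarith
      _ = exp (K * (p * (ω + γ - α))) := (exp_mul _ _).symm
      _ ≤ exp (K * (ω + γ) * p) :=
          exp_le_exp.2 (by nlinarith [mul_nonneg (mul_nonneg hK hα) (by linarith : (0:ℝ) ≤ p)])
  -- all powers of the positive numbers `a, b, c` are exponentials of linear forms in their logs
  have hsplit : ((c / b) ^ ω * b ^ α) ^ p = (c / b) ^ (p * (ω + γ - α)) *
      ((c / a) ^ (-(p * (γ - α))) * a ^ (α * p) * (b / a) ^ (p * γ)) := by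
    simp only [rpow_def_of_pos, ha, hb, hc, div_pos, exp_pos, log_div, log_exp, ← exp_add,
      ne_eq, not_false_eq_true, ha.ne', hb.ne', hc.ne']
    ring_nf
  calc (M * d * (c / b) ^ ω * b ^ α) ^ p
      = M ^ p * d ^ p * ((c / b) ^ ω * b ^ α) ^ p := by
        rw [mul_assoc, mul_rpow (by positivity) (by positivity),
          mul_rpow hM hd]
    _ ≤ M ^ p * (K ^ (p - 1) * d) * (exp (K * (ω + γ) * p) *
          ((c / a) ^ (-(p * (γ - α))) * a ^ (α * p) * (b / a) ^ (p * γ))) := by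
        rw [hsplit]
        gcongr
        exact rpow_le_rpow_sub_one_mul hd hdK hp
    _ = _ := by ring

lemma le_mul_of_forall_le_mul_of_setLIntegral_le {α : Type*} [MeasurableSpace α]
    {ν : Measure α} {T S : Set α} {g : α → ℝ} {a C B : ℝ} (hT : MeasurableSet T)
    (hνT : ν T = 1) (hTS : T ⊆ S) (hC : 0 ≤ C) (hB : 0 ≤ B) (hg : ∀ τ ∈ T, a ≤ C * g τ)
    (hint : ∫⁻ τ in S, ENNReal.ofReal (g τ) ∂ν ≤ ENNReal.ofReal B) : a ≤ C * B := by
  rw [← ENNReal.ofReal_le_ofReal_iff (by positivity), ENNReal.ofReal_mul hC]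
  calc ENNReal.ofReal a = ∫⁻ _ in T, ENNReal.ofReal a ∂ν := by
        rw [setLIntegral_const, hνT, mul_one]
    _ ≤ ∫⁻ τ in T, ENNReal.ofReal C * ENNReal.ofReal (g τ) ∂ν := by
        refine setLIntegral_mono' hT fun τ hτ => ?_
        rw [← ENNReal.ofReal_mul hC]
        exact ENNReal.ofReal_le_ofReal (hg τ hτ)
    _ = ENNReal.ofReal C * ∫⁻ τ in T, ENNReal.ofReal (g τ) ∂ν :=
        lintegral_const_mul' _ _ ENNReal.ofReal_ne_top
    _ ≤ ENNReal.ofReal C * ENNReal.ofReal B := by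
        gcongr
        exact (lintegral_mono_set hTS).trans hint

lemma apply_projection_eq_comp_apply {U V : ℝ → ℝ → X →L[ℝ] X} {P : ℝ → X →L[ℝ] X}
    (hU : IsEvolutionOperator U) (hP : IsProjectionValued P) (hC : CompatibleProjection U V P)
    {s τ t : ℝ} (hs : 0 ≤ s) (hsτ : s ≤ τ) (hτt : τ ≤ t) (x : X) :
    U t s (P s x) = (U t τ).comp (P τ) (U τ s (P s x)) := by
  have hproj : P τ (U τ s (P s x)) = U τ s (P s x) := by
    rw [← ContinuousLinearMap.comp_apply, hC.1 s τ hs hsτ, ContinuousLinearMap.comp_apply,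
      ← ContinuousLinearMap.comp_apply (P s), hP.1 s hs]
  rw [ContinuousLinearMap.comp_apply, hproj, ← hU.2.1 s τ t hs hsτ hτt]
  rfl

lemma norm_rpow_le_mul_weighted_of_mem_Ioo {μ : ℝ → ℝ} {Kμ : ℝ} (hpos : ∀ t, 0 ≤ t → 0 < μ t)
    (hmono : MonotoneOn μ (Ici 0)) (hdiff : ∀ t, 0 ≤ t → DifferentiableAt ℝ μ t)
    (hKμ : ∀ t, 0 ≤ t → deriv μ t / μ t ≤ Kμ) {U V : ℝ → ℝ → X →L[ℝ] X} {P : ℝ → X →L[ℝ] X}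
    (hU : IsEvolutionOperator U) (hP : IsProjectionValued P) (hC : CompatibleProjection U V P)
    {M ω α γ p : ℝ} (hM : 0 ≤ M) (hω : 0 ≤ ω) (hα : 0 ≤ α) (hγ : α ≤ γ) (hp : 1 ≤ p)
    (hUP : ∀ s t, 0 ≤ s → s < t →
      ‖(U t s).comp (P s)‖ ≤ M * (deriv μ s / μ s) * (μ t / μ s) ^ ω * μ s ^ α)
    {s τ t : ℝ} (hs : 0 ≤ s) (hsτ : s < τ) (hτ : τ ∈ Ioo (t - 1) t) (x : X) :
    ‖U t s (P s x)‖ ^ p ≤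
      M ^ p * Kμ ^ (p - 1) * exp (Kμ * (ω + γ) * p) * (μ t / μ s) ^ (-(p * (γ - α))) *
        μ s ^ (α * p) * (deriv μ τ / μ τ * (μ τ / μ s) ^ (p * γ) * ‖U τ s (P s x)‖ ^ p) := by
  have hτ0 : 0 ≤ τ := hs.trans hsτ.le
  have hd : 0 ≤ deriv μ τ / μ τ :=
    deriv_div_nonneg_of_monotoneOn hmono hτ0 (hdiff τ hτ0) (hpos τ hτ0)
  have hK : 0 ≤ Kμ := hd.trans (hKμ τ hτ0)
  have hratio : μ t / μ τ ≤ exp Kμ :=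
    (div_le_exp_of_deriv_div_le hpos hdiff hKμ hτ0 hτ.2.le).trans
      (exp_le_exp.2 (by nlinarith [hτ.1]))
  have hnorm : ‖U t s (P s x)‖ ≤
      M * (deriv μ τ / μ τ) * (μ t / μ τ) ^ ω * μ τ ^ α * ‖U τ s (P s x)‖ := by
    rw [apply_projection_eq_comp_apply hU hP hC hs hsτ.le hτ.2.le]
    exact (ContinuousLinearMap.le_opNorm _ _).trans
      (mul_le_mul_of_nonneg_right (hUP τ t hτ0 hτ.2) (norm_nonneg _))
  have hμτ := hpos τ hτ0
  have hμt := hpos t (hτ0.trans hτ.2.le)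
  calc ‖U t s (P s x)‖ ^ p
      ≤ (M * (deriv μ τ / μ τ) * (μ t / μ τ) ^ ω * μ τ ^ α * ‖U τ s (P s x)‖) ^ p := by
        gcongr
    _ = (M * (deriv μ τ / μ τ) * (μ t / μ τ) ^ ω * μ τ ^ α) ^ p * ‖U τ s (P s x)‖ ^ p :=
        mul_rpow (by positivity) (norm_nonneg _)
    _ ≤ _ := by
        rw [← mul_assoc]
        gcongr
        exact weight_rpow_le (hpos s hs) hμτ hμt hratio hd (hKμ τ hτ0) hM hω hα hγ hp

theorem stable_pointwise_estimate_far_general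
    {X : Type*} [NormedAddCommGroup X] [NormedSpace ℝ X]
    (μ : ℝ → ℝ) (Kμ : ℝ) (hgr : IsGrowthRate μ)
    (hdiff : ∀ t, 0 ≤ t → DifferentiableAt ℝ μ t)
    (hKμ : ∀ t, 0 ≤ t → deriv μ t / μ t ≤ Kμ)
    (U V : ℝ → ℝ → X →L[ℝ] X) (P : ℝ → X →L[ℝ] X)
    (hU : IsEvolutionOperator U) (hP : IsProjectionValued P)
    (hC : CompatibleProjection U V P)
    (M ω α : ℝ) (hω : 0 < ω) (hα : 0 ≤ α) (hM : 1 ≤ M)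
    (hUP : ∀ s t, 0 ≤ s → s < t →
      ‖(U t s).comp (P s)‖ ≤ M * (deriv μ s / μ s) * (μ t / μ s) ^ ω * μ s ^ α)
    (p γ ε D : ℝ) (hp : 1 ≤ p) (hγ : α < γ) (hD : 0 < D)
    (hint : ∀ s, 0 ≤ s → ∀ x : X,
      ∫⁻ τ in Set.Ioi s, ENNReal.ofReal
          (deriv μ τ / μ τ * (μ τ / μ s) ^ (p * γ) * ‖U τ s (P s x)‖ ^ p)
        ≤ ENNReal.ofReal (D * μ s ^ (p * ε) * ‖x‖ ^ p)) :
    ∀ s t, 0 ≤ s → s + 1 ≤ t → ∀ x : X,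
      ‖U t s (P s x)‖ ^ p ≤
        D * M ^ p * Kμ ^ (p - 1) * Real.exp (Kμ * (ω + γ) * p) *
          (μ t / μ s) ^ (-(p * (γ - α))) * μ s ^ (p * (ε + α)) * ‖x‖ ^ p := by
  intro s t hs hst x
  obtain ⟨hμ1, hmono, -, -⟩ := hgr
  have hpos : ∀ r, 0 ≤ r → 0 < μ r := fun r hr => one_pos.trans_le (hμ1 r hr)
  have ht : 0 ≤ t := by linarith
  have hK : 0 ≤ Kμ :=
    (deriv_div_nonneg_of_monotoneOn hmono ht (hdiff t ht) (hpos t ht)).trans (hKμ t ht)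
  have hM0 : 0 ≤ M := by linarith
  have hμs := hpos s hs
  have hμt := hpos t ht
  have hbound := le_mul_of_forall_le_mul_of_setLIntegral_le measurableSet_Ioo
    (by rw [Real.volume_Ioo, sub_sub_cancel, ENNReal.ofReal_one])
    (fun τ hτ => (by linarith [hτ.1] : s < τ) : Ioo (t - 1) t ⊆ Ioi s) (by positivity)
    (by positivity)
    (fun τ hτ => norm_rpow_le_mul_weighted_of_mem_Ioo hpos hmono hdiff hKμ hU hP hC
      (by linarith) hω.le hα hγ.le hp hUP hs (by linarith [hτ.1]) hτ x) (hint s hs x)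
  convert hbound using 1
  rw [show p * (ε + α) = p * ε + α * p by ring, rpow_add hμs]
  ring

/-- The estimate \eqref{eq:maj-1} in the proof of Theorem 3.2: for `t ≥ s + 1`,
`‖U(t,s)P(s)x‖^p ≤ D M^p K_μ^{p-1} e^{K_μ(ω+γ)p} (μ(t)/μ(s))^{-p(γ-α)} μ(s)^{p(ε+α)} ‖x‖^p`. -/
theorem stable_pointwise_estimate_far
    {X : Type*} [NormedAddCommGroup X] [NormedSpace ℝ X] [CompleteSpace X]
    (μ : ℝ → ℝ) (Kμ : ℝ) (hgr : IsGrowthRate μ)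
    (hdiff : ∀ t, 0 ≤ t → DifferentiableAt ℝ μ t)
    (hKμ : ∀ t, 0 ≤ t → deriv μ t / μ t ≤ Kμ)
    (U V : ℝ → ℝ → X →L[ℝ] X) (P : ℝ → X →L[ℝ] X)
    (hU : IsEvolutionOperator U) (hP : IsProjectionValued P)
    (hC : CompatibleProjection U V P)
    (M ω α : ℝ) (hω : 0 < ω) (hα : 0 ≤ α) (hM : 1 ≤ M)
    (hUP : ∀ s t, 0 ≤ s → s < t →
      ‖(U t s).comp (P s)‖ ≤ M * (deriv μ s / μ s) * (μ t / μ s) ^ ω * μ s ^ α)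
    (p γ ε D : ℝ) (hp : 1 ≤ p) (hγ : α < γ) (hε : 0 ≤ ε) (hD : 0 < D)
    (hint : ∀ s, 0 ≤ s → ∀ x : X,
      ∫⁻ τ in Set.Ioi s, ENNReal.ofReal
          (deriv μ τ / μ τ * (μ τ / μ s) ^ (p * γ) * ‖U τ s (P s x)‖ ^ p)
        ≤ ENNReal.ofReal (D * μ s ^ (p * ε) * ‖x‖ ^ p)) :
    ∀ s t, 0 ≤ s → s + 1 ≤ t → ∀ x : X,
      ‖U t s (P s x)‖ ^ p ≤
        D * M ^ p * Kμ ^ (p - 1) * Real.exp (Kμ * (ω + γ) * p) *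
          (μ t / μ s) ^ (-(p * (γ - α))) * μ s ^ (p * (ε + α)) * ‖x‖ ^ p :=
  stable_pointwise_estimate_far_general μ Kμ hgr hdiff hKμ U V P hU hP hC M ω α hω hα hM hUP p γ ε D
    hp hγ hD hint
end
end
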